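/- arXiv:2312.15081 — 4 statements merged into one kernel-verified Lean document; each statement's English description precedes it below -/
import Mathlib

section
/- Fix k ≥ 2 and B > 0, and define F_k : ℝ^k → (0,1] by F_k(x) = exp(x₁)/Σ_{l=1}^{k} exp(x_l). Then for every x ∈ [−B,B]^k, the Hessian of −log F_k at x annihilates the all-ones vector, i.e. ∇²(−log F_k(x))·1 = 0, and satisfies the matrix inequality ∇²(−log F_k(x)) ⪰ (1/(k·exp(2B)))·(I − (1/k)·11ᵀ) in the positive semidefinite order. -/
open scoped Classical
open Matrix

noncomputable section

/-- `F_k(x) = exp(x₁)/Σ_l exp(x_l)` (junk value `0` in the degenerate case `k = 0`). -/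
def Fk {k : ℕ} (x : Fin k → ℝ) : ℝ :=
  if h : 0 < k then Real.exp (x ⟨0, h⟩) / ∑ l, Real.exp (x l) else 0

/-- The Hessian matrix of a function of `k` real variables, via the second
iterated Fréchet derivative evaluated at pairs of coordinate directions. -/
def hessian {k : ℕ} (f : (Fin k → ℝ) → ℝ) (x : Fin k → ℝ) :
    Matrix (Fin k) (Fin k) ℝ :=
  Matrix.of fun i j => iteratedFDeriv ℝ 2 f x ![Pi.single i 1, Pi.single j 1]

/-!
Up to a linear term, `-log F_k` is the log-sum-exp function, whose Hessian at `x` is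
`diag p - p pᵀ` for the Gibbs weights `p = softmax x`. Its quadratic form at `v` is the
variance `∑ p_i (v_i - ⟨p, v⟩)²` of `v` under `p`, which vanishes on constant vectors.
On `[-B, B]^k` every weight is at least `e^{-B} / (k e^B)`, so the variance dominates
`(1 / (k e^{2B})) ∑ (v_i - ⟨p, v⟩)²`; and the sum of squared deviations from any point is at
least the one from the mean, which is the quadratic form of `I - (1/k) 11ᵀ`.
-/

open Finset Real

section Softmax

variable {ι : Type*} [Fintype ι]

def logSumExp (x : ι → ℝ) : ℝ := log (∑ l, exp (x l))

def softmax (x : ι → ℝ) (i : ι) : ℝ := exp (x i) / ∑ l, exp (x l)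

lemma sum_exp_pos [Nonempty ι] (x : ι → ℝ) : 0 < ∑ l, exp (x l) :=
  sum_pos (fun _ _ => exp_pos _) univ_nonempty

lemma sum_softmax [Nonempty ι] (x : ι → ℝ) : ∑ i, softmax x i = 1 := by
  simp only [softmax]
  rw [← sum_div, div_self (sum_exp_pos x).ne']

lemma softmax_eq_exp_sub_logSumExp [Nonempty ι] (x : ι → ℝ) (i : ι) :
    softmax x i = exp (x i - logSumExp x) := by
  rw [softmax, logSumExp, exp_sub, exp_log (sum_exp_pos x)]

lemma one_div_card_mul_exp_two_mul_le_softmax [Nonempty ι] {B : ℝ} {x : ι → ℝ}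
    (hx : ∀ i, |x i| ≤ B) (i : ι) : 1 / (Fintype.card ι * exp (2 * B)) ≤ softmax x i := by
  have hsum : ∑ l, exp (x l) ≤ Fintype.card ι * exp B := by
    simpa using sum_le_sum fun l (_ : l ∈ univ) => exp_le_exp.mpr (le_of_abs_le (hx l))
  calc 1 / (Fintype.card ι * exp (2 * B)) = exp (-B) / (Fintype.card ι * exp B) := by
        rw [two_mul, exp_add, exp_neg]
        field_simp
    _ ≤ exp (x i) / ∑ l, exp (x l) :=
        div_le_div₀ (exp_pos _).le (exp_le_exp.mpr (neg_le_of_abs_le (hx i))) (sum_exp_pos x) hsum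

lemma contDiff_logSumExp [Nonempty ι] : ContDiff ℝ ⊤ (logSumExp : (ι → ℝ) → ℝ) :=
  (ContDiff.sum fun l _ => contDiff_exp.comp (contDiff_apply ℝ ℝ l)).log
    fun x => (sum_exp_pos x).ne'

lemma hasFDerivAt_logSumExp [Nonempty ι] (x : ι → ℝ) :
    HasFDerivAt logSumExp
      (∑ l, softmax x l • ContinuousLinearMap.proj (R := ℝ) (φ := fun _ : ι => ℝ) l) x := by
  have hsum : HasFDerivAt (fun y : ι → ℝ => ∑ l, exp (y l))
      (∑ l, exp (x l) • ContinuousLinearMap.proj (R := ℝ) (φ := fun _ : ι => ℝ) l) x :=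
    HasFDerivAt.fun_sum fun l _ => (hasFDerivAt_apply l x).exp
  refine (hsum.log (sum_exp_pos x).ne').congr_fderiv ?_
  simp only [softmax, smul_sum, smul_smul, div_eq_inv_mul]

lemma hasFDerivAt_softmax [Nonempty ι] (x : ι → ℝ) (j : ι) :
    HasFDerivAt (fun y => softmax y j)
      (softmax x j • (ContinuousLinearMap.proj (R := ℝ) (φ := fun _ : ι => ℝ) j -
        ∑ l, softmax x l • ContinuousLinearMap.proj (R := ℝ) (φ := fun _ : ι => ℝ) l)) x := by
  have h := ((hasFDerivAt_apply j x).fun_sub (hasFDerivAt_logSumExp x)).exp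
  rw [← softmax_eq_exp_sub_logSumExp] at h
  exact h.congr_of_eventuallyEq
    (Filter.Eventually.of_forall fun y => softmax_eq_exp_sub_logSumExp y j)

variable [DecidableEq ι] [Nonempty ι]

lemma fderiv_logSumExp_sub_apply_single (i₀ : ι) (y : ι → ℝ) (j : ι) :
    fderiv ℝ (fun z => logSumExp z - z i₀) y (Pi.single j 1) =
      softmax y j - (Pi.single j 1 : ι → ℝ) i₀ := by
  rw [((hasFDerivAt_logSumExp y).fun_sub (hasFDerivAt_apply i₀ y)).fderiv]
  simp [Pi.single_apply]

lemma fderiv_softmax_apply_single (x : ι → ℝ) (i j : ι) :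
    fderiv ℝ (fun y => softmax y j) x (Pi.single i 1) =
      softmax x j * ((if i = j then 1 else 0) - softmax x i) := by
  rw [(hasFDerivAt_softmax x j).fderiv]
  simp [Pi.single_apply, eq_comm]

end Softmax

lemma hessian_apply_of_contDiffAt {k : ℕ} {f : (Fin k → ℝ) → ℝ} {x : Fin k → ℝ}
    (hf : ContDiffAt ℝ 2 f x) (i j : Fin k) :
    hessian f x i j = fderiv ℝ (fun y => fderiv ℝ f y (Pi.single j 1)) x (Pi.single i 1) := by
  have hdiff : DifferentiableAt ℝ (fderiv ℝ f) x :=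
    (hf.fderiv_right (m := 1) le_rfl).differentiableAt one_ne_zero
  rw [hessian, of_apply, iteratedFDeriv_two_apply,
    fderiv_clm_apply hdiff (differentiableAt_const _)]
  simp

lemma neg_log_Fk_eq_logSumExp_sub {k : ℕ} (hk : 0 < k) :
    (fun y : Fin k → ℝ => -log (Fk y)) = fun y => logSumExp y - y ⟨0, hk⟩ := by
  have : Nonempty (Fin k) := ⟨⟨0, hk⟩⟩
  funext y
  rw [Fk, dif_pos hk, log_div (exp_ne_zero _) (sum_exp_pos y).ne', log_exp, logSumExp]
  ring

lemma hessian_neg_log_Fk {k : ℕ} (hk : 0 < k) (x : Fin k → ℝ) :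
    hessian (fun y => -log (Fk y)) x =
      diagonal (softmax x) - vecMulVec (softmax x) (softmax x) := by
  have : Nonempty (Fin k) := ⟨⟨0, hk⟩⟩
  have hsmooth : ContDiffAt ℝ 2 (fun y : Fin k → ℝ => logSumExp y - y ⟨0, hk⟩) x :=
    (contDiff_logSumExp.sub (contDiff_apply ℝ ℝ _)).contDiffAt.of_le le_top
  ext i j
  simp only [neg_log_Fk_eq_logSumExp_sub hk, hessian_apply_of_contDiffAt hsmooth,
    fderiv_logSumExp_sub_apply_single, fderiv_sub_const, fderiv_softmax_apply_single]
  rcases eq_or_ne i j with rfl | hij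
  · simp only [↓reduceIte, Matrix.sub_apply, diagonal_apply_eq, vecMulVec_apply]
    ring
  · simp [vecMulVec_apply, hij, mul_comm]

section Centering

variable {ι : Type*} [Fintype ι]

lemma sum_sq_sub_sq_sum_div_card_le (v : ι → ℝ) (a : ℝ) :
    ∑ i, v i ^ 2 - (∑ i, v i) ^ 2 / Fintype.card ι ≤ ∑ i, (v i - a) ^ 2 := by
  rcases isEmpty_or_nonempty ι with hι | hι
  · simp
  have hn : (0 : ℝ) < Fintype.card ι := by exact_mod_cast Fintype.card_pos
  have hexpand : ∑ i, (v i - a) ^ 2 =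
      ∑ i, v i ^ 2 - 2 * a * ∑ i, v i + Fintype.card ι * a ^ 2 := by
    simp only [sub_sq, sum_add_distrib, sum_sub_distrib, sum_const, card_univ, nsmul_eq_mul,
      mul_sum]
    exact congrArg₂ _ (congrArg₂ _ rfl (sum_congr rfl fun i _ => by ring)) rfl
  have hgap : ∑ i, (v i - a) ^ 2 - (∑ i, v i ^ 2 - (∑ i, v i) ^ 2 / Fintype.card ι) =
      (Fintype.card ι * a - ∑ i, v i) ^ 2 / Fintype.card ι := by
    rw [hexpand]
    field_simp
    ring
  linarith [div_nonneg (sq_nonneg (Fintype.card ι * a - ∑ i, v i)) hn.le]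

variable [DecidableEq ι]

lemma centering_mulVec (c : ℝ) (v : ι → ℝ) :
    (of fun i j : ι => c * ((if i = j then (1 : ℝ) else 0) - 1 / Fintype.card ι)) *ᵥ v =
      c • (v - fun _ => (∑ j, v j) / Fintype.card ι) := by
  ext i
  simp only [mulVec, dotProduct, div_eq_mul_inv, one_mul, mul_sub, mul_ite, mul_one, mul_zero,
    of_apply, sub_mul, ite_mul, zero_mul, sum_sub_distrib, sum_ite_eq, mem_univ, ↓reduceIte,
    ← mul_sum, Pi.smul_apply, Pi.sub_apply, smul_eq_mul, sub_right_inj]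
  ring

lemma dotProduct_mulVec_centering (c : ℝ) (v : ι → ℝ) :
    v ⬝ᵥ (of fun i j : ι => c * ((if i = j then (1 : ℝ) else 0) - 1 / Fintype.card ι)) *ᵥ v =
      c * (∑ i, v i ^ 2 - (∑ i, v i) ^ 2 / Fintype.card ι) := by
  rw [centering_mulVec, dotProduct_smul, dotProduct_sub]
  congr 1
  simp only [dotProduct, ← sum_mul, sq]
  ring

lemma mulVec_diagonal_sub_vecMulVec_one {p : ι → ℝ} (hp : ∑ i, p i = 1) :
    (diagonal p - vecMulVec p p) *ᵥ (fun _ => 1) = 0 := by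
  ext i
  simp [sub_mulVec, mulVec_diagonal, vecMulVec_mulVec, dotProduct, hp]

lemma dotProduct_mulVec_diagonal_sub_vecMulVec {p : ι → ℝ} (hp : ∑ i, p i = 1) (v : ι → ℝ) :
    v ⬝ᵥ (diagonal p - vecMulVec p p) *ᵥ v = ∑ i, p i * (v i - p ⬝ᵥ v) ^ 2 := by
  set μ := p ⬝ᵥ v
  calc v ⬝ᵥ (diagonal p - vecMulVec p p) *ᵥ v = ∑ i, p i * v i ^ 2 - μ ^ 2 := by
        rw [sub_mulVec, dotProduct_sub, dotProduct_mulVec v (vecMulVec p p), vecMul_vecMulVec,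
          smul_dotProduct, dotProduct_comm v p]
        simp only [dotProduct, mulVec_diagonal, smul_eq_mul, sq, μ]
        congr 1
        exact sum_congr rfl fun i _ => by ring
    _ = ∑ i, p i * v i ^ 2 - 2 * μ * ∑ i, p i * v i + μ ^ 2 * ∑ i, p i := by
        rw [hp]
        simp only [dotProduct, mul_one, μ]
        ring
    _ = ∑ i, p i * (v i - μ) ^ 2 := by
        rw [mul_sum, mul_sum, ← sum_sub_distrib, ← sum_add_distrib]
        exact sum_congr rfl fun i _ => by ring

lemma posSemidef_diagonal_sub_vecMulVec_sub_centering {p : ι → ℝ} (hp : ∑ i, p i = 1)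
    {c : ℝ} (hc : 0 ≤ c) (hcp : ∀ i, c ≤ p i) :
    (diagonal p - vecMulVec p p -
      of fun i j : ι => c * ((if i = j then (1 : ℝ) else 0) - 1 / Fintype.card ι)).PosSemidef := by
  refine PosSemidef.of_dotProduct_mulVec_nonneg ?_ fun v => ?_
  · ext i j
    rcases eq_or_ne i j with rfl | hij
    · simp
    · simp [vecMulVec_apply, hij, hij.symm, mul_comm]
  rw [star_trivial, sub_mulVec, dotProduct_sub, sub_nonneg,
    dotProduct_mulVec_diagonal_sub_vecMulVec hp, dotProduct_mulVec_centering]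
  set μ := p ⬝ᵥ v
  calc c * (∑ i, v i ^ 2 - (∑ i, v i) ^ 2 / Fintype.card ι)
      ≤ c * ∑ i, (v i - μ) ^ 2 :=
        mul_le_mul_of_nonneg_left (sum_sq_sub_sq_sum_div_card_le v μ) hc
    _ = ∑ i, c * (v i - μ) ^ 2 := mul_sum _ _ _
    _ ≤ ∑ i, p i * (v i - μ) ^ 2 :=
        sum_le_sum fun i _ => mul_le_mul_of_nonneg_right (hcp i) (sq_nonneg _)

end Centering

theorem neg_log_Fk_hessian_bounds_general
    (k : ℕ) (B : ℝ)
    (x : Fin k → ℝ) (hx : ∀ i, |x i| ≤ B) :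
    (hessian (fun y => -Real.log (Fk y)) x).mulVec (fun _ => (1 : ℝ)) = 0 ∧
      (hessian (fun y => -Real.log (Fk y)) x -
          Matrix.of fun i j : Fin k =>
            1 / ((k : ℝ) * Real.exp (2 * B)) *
              ((if i = j then (1 : ℝ) else 0) - 1 / (k : ℝ))).PosSemidef := by
  rcases Nat.eq_zero_or_pos k with rfl | hk
  · exact ⟨Subsingleton.elim _ _, by convert PosSemidef.zero; exact Subsingleton.elim _ _⟩
  have : Nonempty (Fin k) := ⟨⟨0, hk⟩⟩
  rw [hessian_neg_log_Fk hk x]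
  refine ⟨mulVec_diagonal_sub_vecMulVec_one (sum_softmax x), ?_⟩
  simpa only [Fintype.card_fin] using posSemidef_diagonal_sub_vecMulVec_sub_centering
    (sum_softmax x) (by positivity) (one_div_card_mul_exp_two_mul_le_softmax hx)

/-- for `k ≥ 2`, `B > 0` and `x ∈ [−B,B]^k`, the Hessian of
`−log F_k` at `x` annihilates the all-ones vector and dominates
`(1/(k·exp(2B)))·(I − (1/k)·11ᵀ)` in the positive semidefinite order. -/
theorem neg_log_Fk_hessian_bounds
    (k : ℕ) (B : ℝ) (hk : 2 ≤ k) (hB : 0 < B)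
    (x : Fin k → ℝ) (hx : ∀ i, |x i| ≤ B) :
    (hessian (fun y => -Real.log (Fk y)) x).mulVec (fun _ => (1 : ℝ)) = 0 ∧
      (hessian (fun y => -Real.log (Fk y)) x -
          Matrix.of fun i j : Fin k =>
            1 / ((k : ℝ) * Real.exp (2 * B)) *
              ((if i = j then (1 : ℝ) else 0) - 1 / (k : ℝ))).PosSemidef :=
  neg_log_Fk_hessian_bounds_general k B x hx

end
end

section
/- Let σ_1,…,σ_ℓ be ℓ independent full rankings of n items drawn from the Plackett–Luce model with parameter θ* ∈ Θ_B, and let L be the (random) Plackett–Luce comparison Laplacian built from the ℓ(n−1) choices obtained from these rankings by repeated selection. Set α_B = 1/(4(1+2e^{3B})). Then λ₂(L) ≥ α_B·n with probability at least 1 − n²·exp(−α_B²·ℓ). -/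
open scoped Classical
open Matrix

noncomputable section

/-- Squared Euclidean (ℓ₂) distance between two vectors. -/
def sqDist {ι : Type*} [Fintype ι] (a b : ι → ℝ) : ℝ := ∑ i, (a i - b i) ^ 2

/-- Probability of an event under a density `p` on a finite outcome space. -/
def probOf {α : Type*} [Fintype α] (p : α → ℝ) (E : Set α) : ℝ :=
  ∑ y, if y ∈ E then p y else 0

/-- Expectation of `f` under a density `p` on a finite outcome space. -/
def expect {α : Type*} [Fintype α] (p : α → ℝ) (f : α → ℝ) : ℝ := ∑ y, p y * f y

/-- The second smallest eigenvalue, expressed via the Rayleigh quotient over unit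
vectors orthogonal to the all-ones vector; for the symmetric matrices considered
here (whose kernel contains the all-ones vector) this is exactly λ₂. -/
def lambda2 {ι : Type*} [Fintype ι] (L : Matrix ι ι ℝ) : ℝ :=
  sInf {r | ∃ v : ι → ℝ, (∑ i, v i ^ 2) = 1 ∧ (∑ i, v i) = 0 ∧ r = v ⬝ᵥ L.mulVec v}

/-- MNL choice probability of choosing `x` from the set `S`. -/
def mnlProb {n : ℕ} (θ : Fin n → ℝ) (S : Finset (Fin n)) (x : Fin n) : ℝ :=
  Real.exp (θ x) / ∑ y ∈ S, Real.exp (θ y)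

/-- The parameter set Θ_B = {θ : ‖θ‖_∞ ≤ B, 1ᵀθ = 0}. -/
def ThetaB (n : ℕ) (B : ℝ) : Set (Fin n → ℝ) :=
  {θ | (∀ i, |θ i| ≤ B) ∧ (∑ i, θ i) = 0}

/-- The comparison-graph Laplacian `L = (1/m) Σ_j E_j (k_j I − 11ᵀ) E_jᵀ` of a
collection of choice sets, written entrywise. -/
def mnlLaplacian {n : ℕ} {κ : Type*} [Fintype κ] (C : κ → Finset (Fin n)) :
    Matrix (Fin n) (Fin n) ℝ :=
  Matrix.of fun a b =>
    (1 / (Fintype.card κ : ℝ)) *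
      ∑ j, if a ∈ C j ∧ b ∈ C j then (if a = b then ((C j).card : ℝ) - 1 else -1) else 0

/-- Density of a full dataset of independent MNL choices, choice `j` from set `C j`. -/
def mnlDensity {n m : ℕ} (θ : Fin n → ℝ) (C : Fin m → Finset (Fin n))
    (y : Fin m → Fin n) : ℝ :=
  ∏ j, if y j ∈ C j then mnlProb θ (C j) (y j) else 0

/-- Scaled negative log-likelihood of the MNL model on a dataset. -/
def mnlNegLogLik {n m : ℕ} (C : Fin m → Finset (Fin n)) (y : Fin m → Fin n)
    (θ : Fin n → ℝ) : ℝ :=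
  -(1 / (m : ℝ)) * ∑ j, Real.log (mnlProb θ (C j) (y j))

/-- `est` is a maximum likelihood estimator over Θ_B for the MNL model. -/
def IsMnlMLE {n m : ℕ} (B : ℝ) (C : Fin m → Finset (Fin n))
    (est : (Fin m → Fin n) → (Fin n → ℝ)) : Prop :=
  ∀ y, est y ∈ ThetaB n B ∧ ∀ θ ∈ ThetaB n B, mnlNegLogLik C y (est y) ≤ mnlNegLogLik C y θ

/-- Plackett–Luce probability of a full ranking `σ`, where `σ x` is the (0-based)
rank of item `x`: the product over positions of the MNL probability of choosing
the item ranked there from the set of items not yet ranked. -/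
def plProb {n : ℕ} (θ : Fin n → ℝ) (σ : Equiv.Perm (Fin n)) : ℝ :=
  ∏ i : Fin n,
    Real.exp (θ (σ.symm i)) /
      ∑ j ∈ Finset.univ.filter fun j : Fin n => i ≤ j, Real.exp (θ (σ.symm j))

/-- Density of `ℓ` i.i.d. Plackett–Luce rankings. -/
def plDensity {n ℓ : ℕ} (θ : Fin n → ℝ) (R : Fin ℓ → Equiv.Perm (Fin n)) : ℝ :=
  ∏ k, plProb θ (R k)

/-- The `ℓ(n−1)` choice sets obtained from the rankings by repeated selection:
for ranking `k` and step `i` (`0 ≤ i ≤ n−2`), the set of items of rank ≥ `i`. -/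
def plChoiceSets {n ℓ : ℕ} (R : Fin ℓ → Equiv.Perm (Fin n)) :
    Fin ℓ × Fin (n - 1) → Finset (Fin n) :=
  fun p => Finset.univ.filter fun x => (p.2 : ℕ) ≤ ((R p.1) x : ℕ)

/-- Scaled negative log-likelihood of the PL model on a dataset of rankings
(equal to the negative log-likelihood of the `ℓ(n−1)` repeated-selection choices). -/
def plNegLogLik {n ℓ : ℕ} (R : Fin ℓ → Equiv.Perm (Fin n)) (θ : Fin n → ℝ) : ℝ :=
  -(1 / ((ℓ : ℝ) * ((n : ℝ) - 1))) * ∑ k, Real.log (plProb θ (R k))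

/-- `est` is a maximum likelihood estimator over Θ_B for the PL model. -/
def IsPlMLE {n ℓ : ℕ} (B : ℝ) (est : (Fin ℓ → Equiv.Perm (Fin n)) → (Fin n → ℝ)) : Prop :=
  ∀ R, est R ∈ ThetaB n B ∧ ∀ θ ∈ ThetaB n B, plNegLogLik R (est R) ≤ plNegLogLik R θ

/-- `α_B = 1/(4(1+2e^{3B}))`. -/
def alphaB (B : ℝ) : ℝ := 1 / (4 * (1 + 2 * Real.exp (3 * B)))

namespace PLX
open Finset


/-- Product form of the PL density on the inverse permutation (ranks → items). -/
def Qfun {n : ℕ} (θ : Fin n → ℝ) (τ : Equiv.Perm (Fin n)) : ℝ :=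
  ∏ i : Fin n,
    Real.exp (θ (τ i)) /
      ∑ j ∈ Finset.univ.filter fun j : Fin n => i ≤ j, Real.exp (θ (τ j))

lemma Qfun_nonneg {n : ℕ} (θ : Fin n → ℝ) (τ : Equiv.Perm (Fin n)) : 0 ≤ Qfun θ τ := by
  apply Finset.prod_nonneg
  intro i _
  apply div_nonneg (Real.exp_pos _).le
  exact Finset.sum_nonneg fun j _ => (Real.exp_pos _).le

def emb {n : ℕ} (a : Fin (n+1)) (j : Fin n) : Fin (n+1) := Equiv.swap 0 a j.succ

lemma emb_injective {n : ℕ} (a : Fin (n+1)) : Function.Injective (emb a) := by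
  intro i j h
  have := (Equiv.swap 0 a).injective h
  exact Fin.succ_injective _ this

lemma emb_ne {n : ℕ} (a : Fin (n+1)) (j : Fin n) : emb a j ≠ a := by
  intro h
  have h2 := congrArg (Equiv.swap 0 a) h
  rw [emb] at h2
  rw [Equiv.swap_apply_self, Equiv.swap_apply_right] at h2
  exact Fin.succ_ne_zero j h2

lemma emb_surj {n : ℕ} (a b : Fin (n+1)) (hb : b ≠ a) : ∃ j, emb a j = b := by
  have h0 : Equiv.swap 0 a b ≠ 0 := by
    intro h
    apply hb
    have h2 := congrArg (Equiv.swap 0 a) h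
    rw [Equiv.swap_apply_self, Equiv.swap_apply_left] at h2
    exact h2
  refine ⟨(Equiv.swap 0 a b).pred h0, ?_⟩
  simp [emb, Fin.succ_pred]

lemma sum_exp_pos {n : ℕ} (θ : Fin n → ℝ) (T : Finset (Fin n)) (hT : T.Nonempty) :
    0 < ∑ t ∈ T, Real.exp (θ t) :=
  Finset.sum_pos (fun t _ => Real.exp_pos _) hT

lemma Qfun_decompose {n : ℕ} (θ : Fin (n+1) → ℝ) (a : Fin (n+1)) (ρ : Equiv.Perm (Fin n)) :
    Qfun θ (Equiv.Perm.decomposeFin.symm (a, ρ)) =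
      (Real.exp (θ a) / ∑ j, Real.exp (θ j)) * Qfun (fun j => θ (emb a j)) ρ := by
  set τ := Equiv.Perm.decomposeFin.symm (a, ρ) with hτ
  have hτ0 : τ 0 = a := Equiv.Perm.decomposeFin_symm_apply_zero a ρ
  have hτs : ∀ i : Fin n, τ i.succ = emb a (ρ i) := fun i =>
    Equiv.Perm.decomposeFin_symm_apply_succ ρ a i
  rw [Qfun, Fin.prod_univ_succ]
  have hfilt0 : (Finset.univ.filter fun j : Fin (n+1) => (0:Fin (n+1)) ≤ j) = Finset.univ := by
    apply Finset.filter_true_of_mem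
    intro j _
    exact Fin.zero_le j
  congr 1
  · rw [hτ0, hfilt0]
    congr 1
    exact Equiv.sum_comp τ (fun j => Real.exp (θ j))
  · rw [Qfun]
    apply Finset.prod_congr rfl
    intro i _
    rw [hτs]
    congr 1
    rw [Finset.sum_filter, Finset.sum_filter, Fin.sum_univ_succ]
    have h1 : ¬ (i.succ ≤ (0 : Fin (n+1))) := by
      simp [Fin.le_def]
    rw [if_neg h1, zero_add]
    apply Finset.sum_congr rfl
    intro j _
    rw [hτs]
    by_cases h : i ≤ j
    · rw [if_pos (Fin.succ_le_succ_iff.mpr h), if_pos h]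
    · rw [if_neg (fun hc => h (Fin.succ_le_succ_iff.mp hc)), if_neg h]

lemma sum1 : ∀ (n : ℕ) (θ : Fin n → ℝ), ∑ τ : Equiv.Perm (Fin n), Qfun θ τ = 1 := by
  intro n
  induction n with
  | zero =>
    intro θ
    rw [Finset.sum_eq_single (Equiv.refl (Fin 0))]
    · rw [Qfun]; simp
    · intro τ _ hτ
      exact absurd (Subsingleton.elim τ (Equiv.refl (Fin 0))) hτ
    · intro h; exact absurd (Finset.mem_univ _) h
  | succ n ih =>
    intro θ
    rw [← Equiv.sum_comp (Equiv.Perm.decomposeFin (n := n)).symm (Qfun θ),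
      Fintype.sum_prod_type]
    have hS : (0:ℝ) < ∑ j, Real.exp (θ j) :=
      sum_exp_pos θ Finset.univ ⟨0, Finset.mem_univ _⟩
    calc ∑ a : Fin (n+1), ∑ ρ : Equiv.Perm (Fin n),
          Qfun θ (Equiv.Perm.decomposeFin.symm (a, ρ))
        = ∑ a : Fin (n+1), Real.exp (θ a) / ∑ j, Real.exp (θ j) := by
          apply Finset.sum_congr rfl
          intro a _
          simp only [Qfun_decompose]
          rw [← Finset.mul_sum, ih, mul_one]
      _ = 1 := by
          rw [← Finset.sum_div, div_self (ne_of_gt hS)]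

lemma lemA : ∀ (n : ℕ) (θ : Fin n → ℝ) (T : Finset (Fin n)) (z : Fin n), z ∈ T →
    (∑ τ : Equiv.Perm (Fin n),
        if ∀ t ∈ T, τ.symm z ≤ τ.symm t then Qfun θ τ else 0)
      = Real.exp (θ z) / ∑ t ∈ T, Real.exp (θ t) := by
  intro n
  induction n with
  | zero => intro θ T z hz; exact z.elim0
  | succ n ih =>
    intro θ T z hz
    have hS : (0:ℝ) < ∑ j, Real.exp (θ j) := sum_exp_pos θ univ ⟨0, mem_univ _⟩
    have hST : (0:ℝ) < ∑ t ∈ T, Real.exp (θ t) := sum_exp_pos θ T ⟨z, hz⟩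
    rw [← Equiv.sum_comp (Equiv.Perm.decomposeFin (n := n)).symm, Fintype.sum_prod_type]
    have key : ∀ a : Fin (n+1), (∑ ρ : Equiv.Perm (Fin n),
        if ∀ t ∈ T, (Equiv.Perm.decomposeFin.symm (a, ρ)).symm z ≤
            (Equiv.Perm.decomposeFin.symm (a, ρ)).symm t
        then Qfun θ (Equiv.Perm.decomposeFin.symm (a, ρ)) else 0) =
        if a = z then Real.exp (θ z) / ∑ j, Real.exp (θ j)
        else if a ∈ T then 0
        else (Real.exp (θ a) / ∑ j, Real.exp (θ j)) *
          (Real.exp (θ z) / ∑ t ∈ T, Real.exp (θ t)) := by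
      intro a
      have hτ0 : ∀ ρ : Equiv.Perm (Fin n), (Equiv.Perm.decomposeFin.symm (a, ρ)) 0 = a :=
        fun ρ => Equiv.Perm.decomposeFin_symm_apply_zero a ρ
      have hsymm : ∀ ρ : Equiv.Perm (Fin n),
          (Equiv.Perm.decomposeFin.symm (a, ρ)).symm a = 0 := fun ρ => by
        rw [Equiv.symm_apply_eq]
        exact (hτ0 ρ).symm
      have hsymm2 : ∀ (ρ : Equiv.Perm (Fin n)) (j : Fin n),
          (Equiv.Perm.decomposeFin.symm (a, ρ)).symm (emb a j) = (ρ.symm j).succ := by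
        intro ρ j
        rw [Equiv.symm_apply_eq, Equiv.Perm.decomposeFin_symm_apply_succ,
          Equiv.apply_symm_apply, emb]
      by_cases haz : a = z
      · subst haz
        rw [if_pos rfl]
        have hcond : ∀ ρ : Equiv.Perm (Fin n), ∀ t ∈ T,
            (Equiv.Perm.decomposeFin.symm (a, ρ)).symm a ≤
              (Equiv.Perm.decomposeFin.symm (a, ρ)).symm t := by
          intro ρ t _
          rw [hsymm ρ]
          exact Fin.zero_le _
        calc (∑ ρ : Equiv.Perm (Fin n),
            if ∀ t ∈ T, (Equiv.Perm.decomposeFin.symm (a, ρ)).symm a ≤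
                (Equiv.Perm.decomposeFin.symm (a, ρ)).symm t
            then Qfun θ (Equiv.Perm.decomposeFin.symm (a, ρ)) else 0)
            = ∑ ρ : Equiv.Perm (Fin n), Qfun θ (Equiv.Perm.decomposeFin.symm (a, ρ)) := by
              apply Finset.sum_congr rfl
              intro ρ _
              rw [if_pos (hcond ρ)]
          _ = Real.exp (θ a) / ∑ j, Real.exp (θ j) := by
              simp only [Qfun_decompose]
              rw [← Finset.mul_sum, sum1, mul_one]
      · by_cases haT : a ∈ T
        · rw [if_neg haz, if_pos haT]
          apply Finset.sum_eq_zero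
          intro ρ _
          rw [if_neg]
          intro hcond
          have h1 := hcond a haT
          rw [hsymm ρ] at h1
          have h2 : (Equiv.Perm.decomposeFin.symm (a, ρ)).symm z = 0 := Fin.le_zero_iff.mp h1
          have h3 : z = a := by
            have := congrArg (Equiv.Perm.decomposeFin.symm (a, ρ)) h2
            rw [Equiv.apply_symm_apply, hτ0 ρ] at this
            exact this
          exact haz h3.symm
        · rw [if_neg haz, if_neg haT]
          have hza : z ≠ a := fun h => haT (h ▸ hz)
          obtain ⟨z', hz'⟩ := emb_surj a z hza
          have hinj : Set.InjOn (emb a) ((emb a) ⁻¹' ↑T) :=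
            (emb_injective a).injOn
          set T' : Finset (Fin n) := T.preimage (emb a) hinj with hT'
          have hmemT' : ∀ j : Fin n, j ∈ T' ↔ emb a j ∈ T := fun j => Finset.mem_preimage
          have hz'T' : z' ∈ T' := (hmemT' z').mpr (hz' ▸ hz)
          have hcond : ∀ ρ : Equiv.Perm (Fin n),
              (∀ t ∈ T, (Equiv.Perm.decomposeFin.symm (a, ρ)).symm z ≤
                (Equiv.Perm.decomposeFin.symm (a, ρ)).symm t) ↔
              (∀ t' ∈ T', ρ.symm z' ≤ ρ.symm t') := by
            intro ρ
            constructor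
            · intro h t' ht'
              have := h (emb a t') ((hmemT' t').mp ht')
              rw [← hz', hsymm2, hsymm2] at this
              exact Fin.succ_le_succ_iff.mp this
            · intro h t ht
              have hta : t ≠ a := fun hc => haT (hc ▸ ht)
              obtain ⟨t', ht'⟩ := emb_surj a t hta
              rw [← hz', ← ht', hsymm2, hsymm2]
              exact Fin.succ_le_succ_iff.mpr (h t' ((hmemT' t').mpr (ht' ▸ ht)))
          have hsumT' : ∑ t' ∈ T', Real.exp (θ (emb a t')) = ∑ t ∈ T, Real.exp (θ t) := by
            apply Finset.sum_preimage (emb a) T hinj (fun t => Real.exp (θ t))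
            intro x hx hrange
            exact absurd (emb_surj a x (fun hc => haT (hc ▸ hx))) (by
              intro ⟨j, hj⟩; exact hrange ⟨j, hj⟩)
          calc (∑ ρ : Equiv.Perm (Fin n),
              if ∀ t ∈ T, (Equiv.Perm.decomposeFin.symm (a, ρ)).symm z ≤
                  (Equiv.Perm.decomposeFin.symm (a, ρ)).symm t
              then Qfun θ (Equiv.Perm.decomposeFin.symm (a, ρ)) else 0)
              = ∑ ρ : Equiv.Perm (Fin n),
                (Real.exp (θ a) / ∑ j, Real.exp (θ j)) *
                  (if ∀ t' ∈ T', ρ.symm z' ≤ ρ.symm t'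
                   then Qfun (fun j => θ (emb a j)) ρ else 0) := by
                apply Finset.sum_congr rfl
                intro ρ _
                rw [Qfun_decompose]
                by_cases hc : ∀ t ∈ T, (Equiv.Perm.decomposeFin.symm (a, ρ)).symm z ≤
                    (Equiv.Perm.decomposeFin.symm (a, ρ)).symm t
                · rw [if_pos hc, if_pos ((hcond ρ).mp hc)]
                · rw [if_neg hc, if_neg (fun hc2 => hc ((hcond ρ).mpr hc2)), mul_zero]
            _ = (Real.exp (θ a) / ∑ j, Real.exp (θ j)) *
                  (Real.exp (θ z) / ∑ t ∈ T, Real.exp (θ t)) := by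
                rw [← Finset.mul_sum, ih (fun j => θ (emb a j)) T' z' hz'T', hz', hsumT']
    rw [Finset.sum_congr rfl (fun a _ => key a)]
    rw [← Finset.sum_filter_add_sum_filter_not Finset.univ (· ∈ T)]
    have h1 : (Finset.univ.filter (· ∈ T)) = T := Finset.filter_univ_mem T
    have hTpart : ∑ a ∈ Finset.univ.filter (· ∈ T), Real.exp (θ a) = ∑ t ∈ T, Real.exp (θ t) := by
      rw [h1]
    have e1 : (∑ a ∈ Finset.univ.filter (· ∈ T),
        if a = z then Real.exp (θ z) / ∑ j, Real.exp (θ j)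
        else if a ∈ T then 0
        else (Real.exp (θ a) / ∑ j, Real.exp (θ j)) *
          (Real.exp (θ z) / ∑ t ∈ T, Real.exp (θ t)))
        = Real.exp (θ z) / ∑ j, Real.exp (θ j) := by
      rw [h1]
      have : ∀ a ∈ T, (if a = z then Real.exp (θ z) / ∑ j, Real.exp (θ j)
          else if a ∈ T then 0
          else (Real.exp (θ a) / ∑ j, Real.exp (θ j)) *
            (Real.exp (θ z) / ∑ t ∈ T, Real.exp (θ t)))
          = if a = z then Real.exp (θ z) / ∑ j, Real.exp (θ j) else 0 := by
        intro a ha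
        by_cases h : a = z
        · rw [if_pos h, if_pos h]
        · rw [if_neg h, if_pos ha, if_neg h]
      rw [Finset.sum_congr rfl this, Finset.sum_ite_eq' T z
        (fun _ => Real.exp (θ z) / ∑ j, Real.exp (θ j)), if_pos hz]
    have e2 : (∑ a ∈ Finset.univ.filter (¬ · ∈ T),
        if a = z then Real.exp (θ z) / ∑ j, Real.exp (θ j)
        else if a ∈ T then 0
        else (Real.exp (θ a) / ∑ j, Real.exp (θ j)) *
          (Real.exp (θ z) / ∑ t ∈ T, Real.exp (θ t)))
        = ((∑ j, Real.exp (θ j)) - ∑ t ∈ T, Real.exp (θ t)) / (∑ j, Real.exp (θ j)) *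
          (Real.exp (θ z) / ∑ t ∈ T, Real.exp (θ t)) := by
      have : ∀ a ∈ Finset.univ.filter (¬ · ∈ T),
          (if a = z then Real.exp (θ z) / ∑ j, Real.exp (θ j)
          else if a ∈ T then 0
          else (Real.exp (θ a) / ∑ j, Real.exp (θ j)) *
            (Real.exp (θ z) / ∑ t ∈ T, Real.exp (θ t)))
          = (Real.exp (θ a) / ∑ j, Real.exp (θ j)) *
            (Real.exp (θ z) / ∑ t ∈ T, Real.exp (θ t)) := by
        intro a ha
        rw [Finset.mem_filter] at ha
        have haT : a ∉ T := ha.2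
        have haz : a ≠ z := fun h => haT (h ▸ hz)
        rw [if_neg haz, if_neg haT]
      rw [Finset.sum_congr rfl this, ← Finset.sum_mul, ← Finset.sum_div]
      congr 2
      have := Finset.sum_filter_add_sum_filter_not Finset.univ (· ∈ T)
        (fun a => Real.exp (θ a))
      rw [hTpart] at this
      linarith
    rw [e1, e2]
    field_simp
    ring



open Finset

lemma sum_pi_prod {α : Type*} [Fintype α] (ℓ : ℕ) (g : α → ℝ) :
    ∑ R : Fin ℓ → α, ∏ k, g (R k) = (∑ x, g x) ^ ℓ := by
  rw [← Fintype.piFinset_univ, ← Finset.prod_univ_sum]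
  simp [Finset.prod_const]

lemma exp_neg_le_quad (u : ℝ) (hu : 0 ≤ u) : Real.exp (-u) ≤ 1 - u + u^2 := by
  have hE := Real.add_one_le_exp u
  have hA : 0 < Real.exp (-u) := Real.exp_pos _
  have hAE : Real.exp (-u) * Real.exp u = 1 := by rw [← Real.exp_add]; simp
  have h1 : Real.exp (-u) * (u + 1) ≤ 1 := by
    calc Real.exp (-u) * (u + 1) ≤ Real.exp (-u) * Real.exp u :=
          mul_le_mul_of_nonneg_left hE hA.le
      _ = 1 := hAE
  nlinarith [pow_nonneg hu 3, hu, h1]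

lemma mgf_bound {α : Type*} [Fintype α] (p f : α → ℝ) (hp : ∀ x, 0 ≤ p x)
    (hp1 : ∑ x, p x = 1) (b μ t : ℝ) (hf0 : ∀ x, 0 ≤ f x) (hfb : ∀ x, f x ≤ b)
    (hμ : μ ≤ ∑ x, p x * f x) (ht : 0 ≤ t) :
    ∑ x, p x * Real.exp (-(t * f x)) ≤ Real.exp (-(t * μ) + t^2 * b^2) := by
  have step1 : ∀ x, p x * Real.exp (-(t * f x)) ≤
      p x - t * (p x * f x) + (t^2 * b^2) * p x := by
    intro x
    have h1 : Real.exp (-(t * f x)) ≤ 1 - t * f x + (t * f x)^2 :=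
      exp_neg_le_quad _ (mul_nonneg ht (hf0 x))
    have h2 : (t * f x)^2 ≤ t^2 * b^2 := by
      rw [mul_pow]
      exact mul_le_mul_of_nonneg_left (pow_le_pow_left₀ (hf0 x) (hfb x) 2) (sq_nonneg t)
    have h3 : p x * Real.exp (-(t * f x)) ≤ p x * (1 - t * f x + t^2 * b^2) :=
      mul_le_mul_of_nonneg_left (by linarith) (hp x)
    calc p x * Real.exp (-(t * f x)) ≤ p x * (1 - t * f x + t^2 * b^2) := h3
      _ = p x - t * (p x * f x) + (t^2 * b^2) * p x := by ring
  calc ∑ x, p x * Real.exp (-(t * f x))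
      ≤ ∑ x, (p x - t * (p x * f x) + (t^2 * b^2) * p x) :=
        Finset.sum_le_sum fun x _ => step1 x
    _ = 1 - t * (∑ x, p x * f x) + t^2 * b^2 := by
        rw [Finset.sum_add_distrib, Finset.sum_sub_distrib, ← Finset.mul_sum,
          ← Finset.mul_sum, hp1, mul_one]
    _ ≤ 1 - t * μ + t^2 * b^2 := by nlinarith [mul_le_mul_of_nonneg_left hμ ht]
    _ ≤ Real.exp (-(t * μ) + t^2 * b^2) := by
        have := Real.add_one_le_exp (-(t * μ) + t^2 * b^2)
        linarith

lemma chernoff_bound {α : Type*} [Fintype α] (q f : α → ℝ) (ℓ : ℕ) (hq : ∀ x, 0 ≤ q x)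
    (c t : ℝ) (ht : 0 ≤ t) :
    (∑ R : Fin ℓ → α, if (∑ k, f (R k)) < c then (∏ k, q (R k)) else 0)
      ≤ Real.exp (t * c) * (∑ x, q x * Real.exp (-(t * f x))) ^ ℓ := by
  have hterm : ∀ R : Fin ℓ → α, (if (∑ k, f (R k)) < c then (∏ k, q (R k)) else 0)
      ≤ Real.exp (t * c) * ∏ k, (q (R k) * Real.exp (-(t * f (R k)))) := by
    intro R
    have hprod : (∏ k, (q (R k) * Real.exp (-(t * f (R k)))))
        = (∏ k, q (R k)) * Real.exp (-(t * ∑ k, f (R k))) := by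
      rw [Finset.prod_mul_distrib]
      congr 1
      rw [← Real.exp_sum]
      congr 1
      rw [Finset.mul_sum, ← Finset.sum_neg_distrib]
    have hP : (0:ℝ) ≤ ∏ k, q (R k) := Finset.prod_nonneg fun k _ => hq _
    by_cases hcase : (∑ k, f (R k)) < c
    · rw [if_pos hcase, hprod]
      have h1 : (1:ℝ) ≤ Real.exp (t * c) * Real.exp (-(t * ∑ k, f (R k))) := by
        rw [← Real.exp_add]
        apply Real.one_le_exp
        nlinarith
      calc (∏ k, q (R k)) = (∏ k, q (R k)) * 1 := by ring
        _ ≤ (∏ k, q (R k)) * (Real.exp (t * c) * Real.exp (-(t * ∑ k, f (R k)))) :=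
            mul_le_mul_of_nonneg_left h1 hP
        _ = Real.exp (t * c) * ((∏ k, q (R k)) * Real.exp (-(t * ∑ k, f (R k)))) := by ring
    · rw [if_neg hcase]
      apply mul_nonneg (Real.exp_pos _).le
      exact Finset.prod_nonneg fun k _ => mul_nonneg (hq _) (Real.exp_pos _).le
  calc (∑ R : Fin ℓ → α, if (∑ k, f (R k)) < c then (∏ k, q (R k)) else 0)
      ≤ ∑ R : Fin ℓ → α, Real.exp (t * c) * ∏ k, (q (R k) * Real.exp (-(t * f (R k)))) :=
        Finset.sum_le_sum fun R _ => hterm R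
    _ = Real.exp (t * c) * (∑ x, q x * Real.exp (-(t * f x))) ^ ℓ := by
        rw [← Finset.mul_sum, sum_pi_prod ℓ (fun x => q x * Real.exp (-(t * f x)))]

lemma probOf_nonneg {α : Type*} [Fintype α] (p : α → ℝ) (hp : ∀ x, 0 ≤ p x) (E : Set α) :
    0 ≤ probOf p E :=
  Finset.sum_nonneg fun x _ => by by_cases h : x ∈ E <;> simp [h, hp x]

lemma probOf_add_compl {α : Type*} [Fintype α] (p : α → ℝ) (hp1 : ∑ x, p x = 1) (E : Set α) :
    probOf p E + probOf p Eᶜ = 1 := by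
  rw [probOf, probOf, ← Finset.sum_add_distrib, ← hp1]
  apply Finset.sum_congr rfl
  intro x _
  by_cases h : x ∈ E <;> simp [h]

lemma probOf_le_sum_of_cover {α ι : Type*} [Fintype α] (p : α → ℝ) (hp : ∀ x, 0 ≤ p x)
    (E : Set α) (F : ι → Set α) (s : Finset ι)
    (hcov : ∀ x ∈ E, ∃ i ∈ s, x ∈ F i) :
    probOf p E ≤ ∑ i ∈ s, probOf p (F i) := by
  have hterm : ∀ x : α, (if x ∈ E then p x else 0) ≤ ∑ i ∈ s, (if x ∈ F i then p x else 0) := by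
    intro x
    by_cases hx : x ∈ E
    · rw [if_pos hx]
      obtain ⟨i, hi, hxi⟩ := hcov x hx
      have h := Finset.single_le_sum (f := fun i => if x ∈ F i then p x else 0)
        (fun i _ => by by_cases h : x ∈ F i <;> simp [h, hp x]) hi
      exact le_trans (le_of_eq (by simp [hxi])) h
    · rw [if_neg hx]
      exact Finset.sum_nonneg fun i _ => by by_cases h : x ∈ F i <;> simp [h, hp x]
  calc probOf p E ≤ ∑ x, ∑ i ∈ s, (if x ∈ F i then p x else 0) :=
        Finset.sum_le_sum fun x _ => hterm x
    _ = ∑ i ∈ s, probOf p (F i) := Finset.sum_comm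



open Finset

lemma double_ite_mem {n : ℕ} (C : Finset (Fin n)) (F : Fin n → Fin n → ℝ) :
    (∑ a, ∑ b, (if a ∈ C ∧ b ∈ C then F a b else 0)) = ∑ a ∈ C, ∑ b ∈ C, F a b := by
  calc (∑ a, ∑ b, (if a ∈ C ∧ b ∈ C then F a b else 0))
      = ∑ a, (if a ∈ C then (∑ b, (if b ∈ C then F a b else 0)) else 0) := by
        apply Finset.sum_congr rfl; intro a _
        by_cases ha : a ∈ C
        · rw [if_pos ha]
          apply Finset.sum_congr rfl; intro b _
          by_cases hb : b ∈ C
          · rw [if_pos ⟨ha, hb⟩, if_pos hb]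
          · rw [if_neg (fun h => hb h.2), if_neg hb]
        · rw [if_neg ha]
          exact Finset.sum_eq_zero fun b _ => if_neg (fun h => ha h.1)
    _ = ∑ a ∈ C, ∑ b ∈ C, F a b := by
        rw [← Finset.sum_filter, Finset.filter_univ_mem]
        apply Finset.sum_congr rfl; intro a _
        rw [← Finset.sum_filter, Finset.filter_univ_mem]

lemma perj {n : ℕ} (C : Finset (Fin n)) (v : Fin n → ℝ) :
    (∑ a, ∑ b, v a * v b *
        (if a ∈ C ∧ b ∈ C then (if a = b then (C.card : ℝ) - 1 else -1) else 0))
    = (1/2) * ∑ a, ∑ b, (if a ∈ C ∧ b ∈ C then (v a - v b)^2 else 0) := by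
  have hL : (∑ a, ∑ b, v a * v b *
        (if a ∈ C ∧ b ∈ C then (if a = b then (C.card : ℝ) - 1 else -1) else 0))
      = ∑ a ∈ C, ∑ b ∈ C, v a * v b * (if a = b then (C.card : ℝ) - 1 else -1) := by
    rw [← double_ite_mem C (fun a b => v a * v b * (if a = b then (C.card : ℝ) - 1 else -1))]
    apply Finset.sum_congr rfl; intro a _
    apply Finset.sum_congr rfl; intro b _
    by_cases h : a ∈ C ∧ b ∈ C
    · rw [if_pos h, if_pos h]
    · rw [if_neg h, if_neg h, mul_zero]
  have hR : (∑ a, ∑ b, (if a ∈ C ∧ b ∈ C then (v a - v b)^2 else 0))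
      = ∑ a ∈ C, ∑ b ∈ C, (v a - v b)^2 := double_ite_mem C _
  rw [hL, hR]
  set k : ℝ := (C.card : ℝ) with hk
  set S1 : ℝ := ∑ a ∈ C, v a with hS1
  set S2 : ℝ := ∑ a ∈ C, (v a)^2 with hS2
  have hLc : (∑ a ∈ C, ∑ b ∈ C, v a * v b * (if a = b then k - 1 else -1))
      = k * S2 - S1 * S1 := by
    have inner : ∀ a ∈ C, (∑ b ∈ C, v a * v b * (if a = b then k - 1 else -1))
        = k * (v a)^2 - v a * S1 := by
      intro a ha
      have split : ∀ b, v a * v b * (if a = b then k - 1 else -1)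
          = (if a = b then k * (v a * v b) else 0) + (-1) * (v a * v b) := by
        intro b
        by_cases h : a = b
        · rw [if_pos h, if_pos h]; ring
        · rw [if_neg h, if_neg h]; ring
      rw [Finset.sum_congr rfl (fun b _ => split b), Finset.sum_add_distrib,
        Finset.sum_ite_eq C a (fun b => k * (v a * v b)), if_pos ha]
      have : ∑ b ∈ C, (-1 : ℝ) * (v a * v b) = - (v a * S1) := by
        rw [hS1, Finset.mul_sum]
        rw [← Finset.sum_neg_distrib]
        apply Finset.sum_congr rfl; intro b _; ring
      rw [this]; ring
    rw [Finset.sum_congr rfl inner, Finset.sum_sub_distrib, ← Finset.mul_sum, ← hS2,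
      ← Finset.sum_mul, ← hS1]
  have hRc : (∑ a ∈ C, ∑ b ∈ C, (v a - v b)^2) = k * S2 - 2 * S1 * S1 + k * S2 := by
    have inner : ∀ a ∈ C, (∑ b ∈ C, (v a - v b)^2)
        = k * (v a)^2 - 2 * v a * S1 + S2 := by
      intro a _
      have expand : ∀ b, (v a - v b)^2 = (v a)^2 - 2 * v a * v b + (v b)^2 := by
        intro b; ring
      rw [Finset.sum_congr rfl (fun b _ => expand b), Finset.sum_add_distrib,
        Finset.sum_sub_distrib, Finset.sum_const, ← hS2]
      have h2 : ∑ b ∈ C, 2 * v a * v b = 2 * v a * S1 := by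
        rw [hS1, Finset.mul_sum]
      rw [h2, nsmul_eq_mul, ← hk]
    rw [Finset.sum_congr rfl inner]
    rw [Finset.sum_add_distrib, Finset.sum_sub_distrib, ← Finset.mul_sum, ← hS2,
      Finset.sum_const, nsmul_eq_mul, ← hk]
    have : ∑ a ∈ C, 2 * v a * S1 = 2 * S1 * S1 := by
      rw [← Finset.sum_mul]
      have : ∑ a ∈ C, 2 * v a = 2 * S1 := by rw [hS1, Finset.mul_sum]
      rw [this]
    rw [this]
  rw [hLc, hRc]; ring

lemma sum_sq_pairs {n : ℕ} (v : Fin n → ℝ) (hv2 : ∑ i, v i ^ 2 = 1)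
    (hv1 : ∑ i, v i = 0) :
    ∑ a, ∑ b, (v a - v b)^2 = 2 * (n : ℝ) := by
  have inner : ∀ a : Fin n, (∑ b, (v a - v b)^2) = (n : ℝ) * (v a)^2 + 1 := by
    intro a
    have expand : ∀ b, (v a - v b)^2 = (v a)^2 - 2 * v a * v b + (v b)^2 := by
      intro b; ring
    rw [Finset.sum_congr rfl (fun b _ => expand b), Finset.sum_add_distrib,
      Finset.sum_sub_distrib, Finset.sum_const, Finset.card_univ, Fintype.card_fin,
      nsmul_eq_mul]
    have h2 : ∑ b, 2 * v a * v b = 0 := by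
      rw [← Finset.mul_sum, hv1, mul_zero]
    rw [h2, hv2]; ring
  rw [Finset.sum_congr rfl (fun a _ => inner a), Finset.sum_add_distrib,
    ← Finset.mul_sum, hv2, Finset.sum_const, Finset.card_univ, Fintype.card_fin,
    nsmul_eq_mul, mul_one]
  ring

lemma quad_lower {n : ℕ} {κ : Type*} [Fintype κ] (C : κ → Finset (Fin n)) (c : ℝ)
    (hc : 0 ≤ c) (hm : 0 < (Fintype.card κ : ℝ))
    (hN : ∀ a b : Fin n, a ≠ b → c ≤ ∑ j, (if a ∈ C j ∧ b ∈ C j then (1:ℝ) else 0))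
    (v : Fin n → ℝ) (hv2 : ∑ i, v i ^ 2 = 1) (hv1 : ∑ i, v i = 0) :
    c * (n : ℝ) / (Fintype.card κ : ℝ) ≤ v ⬝ᵥ (mnlLaplacian C).mulVec v := by
  set m : ℝ := (Fintype.card κ : ℝ) with hmdef
  have step0 : v ⬝ᵥ (mnlLaplacian C).mulVec v
      = (1/m) * ∑ j, ∑ a, ∑ b, v a * v b *
          (if a ∈ C j ∧ b ∈ C j then (if a = b then ((C j).card : ℝ) - 1 else -1) else 0) := by
    calc v ⬝ᵥ (mnlLaplacian C).mulVec v
        = ∑ a, ∑ b, ∑ j, (1/m) * (v a * v b *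
            (if a ∈ C j ∧ b ∈ C j then (if a = b then ((C j).card : ℝ) - 1 else -1) else 0)) := by
          simp only [dotProduct, Matrix.mulVec, mnlLaplacian, Matrix.of_apply]
          apply Finset.sum_congr rfl; intro a _
          rw [Finset.mul_sum]
          apply Finset.sum_congr rfl; intro b _
          rw [Finset.mul_sum, Finset.sum_mul, Finset.mul_sum]
          apply Finset.sum_congr rfl; intro j _
          ring
      _ = ∑ j, ∑ a, ∑ b, (1/m) * (v a * v b *
            (if a ∈ C j ∧ b ∈ C j then (if a = b then ((C j).card : ℝ) - 1 else -1) else 0)) := by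
          rw [Finset.sum_congr rfl (fun a _ => Finset.sum_comm), Finset.sum_comm]
      _ = (1/m) * ∑ j, ∑ a, ∑ b, v a * v b *
            (if a ∈ C j ∧ b ∈ C j then (if a = b then ((C j).card : ℝ) - 1 else -1) else 0) := by
          rw [Finset.mul_sum]
          apply Finset.sum_congr rfl; intro j _
          rw [Finset.mul_sum]
          apply Finset.sum_congr rfl; intro a _
          rw [Finset.mul_sum]
  rw [step0]
  have step1 : ∀ j, (∑ a, ∑ b, v a * v b *
      (if a ∈ C j ∧ b ∈ C j then (if a = b then ((C j).card : ℝ) - 1 else -1) else 0))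
      = (1/2) * ∑ a, ∑ b, (if a ∈ C j ∧ b ∈ C j then (v a - v b)^2 else 0) :=
    fun j => perj (C j) v
  rw [Finset.sum_congr rfl (fun j _ => step1 j), ← Finset.mul_sum]
  have step2 : (∑ j, ∑ a, ∑ b, (if a ∈ C j ∧ b ∈ C j then (v a - v b)^2 else 0))
      = ∑ a, ∑ b, (v a - v b)^2 * (∑ j, (if a ∈ C j ∧ b ∈ C j then (1:ℝ) else 0)) := by
    rw [Finset.sum_comm]
    apply Finset.sum_congr rfl; intro a _
    rw [Finset.sum_comm]
    apply Finset.sum_congr rfl; intro b _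
    rw [Finset.mul_sum]
    apply Finset.sum_congr rfl; intro j _
    rw [mul_boole]
  rw [step2]
  have step3 : c * (2 * (n : ℝ)) ≤ ∑ a, ∑ b, (v a - v b)^2 *
      (∑ j, (if a ∈ C j ∧ b ∈ C j then (1:ℝ) else 0)) := by
    have hterm : ∀ a b : Fin n, c * (v a - v b)^2 ≤ (v a - v b)^2 *
        (∑ j, (if a ∈ C j ∧ b ∈ C j then (1:ℝ) else 0)) := by
      intro a b
      by_cases hab : a = b
      · subst hab; simp
      · rw [mul_comm]
        exact mul_le_mul_of_nonneg_left (hN a b hab) (sq_nonneg _)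
    calc c * (2 * (n:ℝ)) = ∑ a, ∑ b, c * (v a - v b)^2 := by
          rw [← sum_sq_pairs v hv2 hv1]
          rw [Finset.mul_sum]
          apply Finset.sum_congr rfl; intro a _
          rw [Finset.mul_sum]
      _ ≤ _ := Finset.sum_le_sum fun a _ => Finset.sum_le_sum fun b _ => hterm a b
  calc c * (n:ℝ) / m = (1/m) * ((1/2) * (c * (2 * (n:ℝ)))) := by
        field_simp
      _ ≤ (1/m) * ((1/2) * ∑ a, ∑ b, (v a - v b)^2 *
            (∑ j, (if a ∈ C j ∧ b ∈ C j then (1:ℝ) else 0))) := by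
        apply mul_le_mul_of_nonneg_left _ (by positivity)
        apply mul_le_mul_of_nonneg_left step3 (by norm_num)

lemma lambda2_ge {n : ℕ} (hn : 2 ≤ n) (L : Matrix (Fin n) (Fin n) ℝ) (c : ℝ)
    (h : ∀ v : Fin n → ℝ, (∑ i, v i ^ 2) = 1 → (∑ i, v i) = 0 → c ≤ v ⬝ᵥ L.mulVec v) :
    c ≤ lambda2 L := by
  apply le_csInf
  · set i0 : Fin n := ⟨0, by omega⟩ with hi0
    set i1 : Fin n := ⟨1, by omega⟩ with hi1
    have hne : i0 ≠ i1 := by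
      rw [hi0, hi1]
      intro hEq
      have h2 := congrArg Fin.val hEq
      simp at h2
    set s : ℝ := Real.sqrt (1/2) with hs
    have hs2 : s^2 = 1/2 := Real.sq_sqrt (by norm_num)
    set v : Fin n → ℝ := fun i => if i = i0 then s else if i = i1 then -s else 0 with hv
    have hvi0 : v i0 = s := by rw [hv]; simp
    have hvi1 : v i1 = -s := by
      rw [hv]
      simp only [if_neg (Ne.symm hne)]
      simp
    have hvelse : ∀ i, i ≠ i0 → i ≠ i1 → v i = 0 := by
      intro i h0 h1
      rw [hv]
      simp [h0, h1]
    have hv2 : ∑ i, v i ^ 2 = 1 := by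
      have hpt : ∀ i, v i ^ 2 = (if i = i0 then s^2 else 0) + (if i = i1 then s^2 else 0) := by
        intro i
        by_cases h0 : i = i0
        · rw [h0, hvi0, if_pos rfl, if_neg hne]
          ring
        · by_cases h1 : i = i1
          · rw [h1, hvi1, if_neg (Ne.symm hne), if_pos rfl]
            ring
          · rw [hvelse i h0 h1, if_neg h0, if_neg h1]
            ring
      rw [Finset.sum_congr rfl (fun i _ => hpt i), Finset.sum_add_distrib]
      rw [Finset.sum_ite_eq' Finset.univ i0 (fun _ => s^2),
        Finset.sum_ite_eq' Finset.univ i1 (fun _ => s^2)]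
      simp only [Finset.mem_univ, if_pos]
      rw [hs2]
      norm_num
    have hv1 : ∑ i, v i = 0 := by
      have hpt : ∀ i, v i = (if i = i0 then s else 0) + (if i = i1 then -s else 0) := by
        intro i
        by_cases h0 : i = i0
        · rw [h0, hvi0, if_pos rfl, if_neg hne]
          ring
        · by_cases h1 : i = i1
          · rw [h1, hvi1, if_neg (Ne.symm hne), if_pos rfl]
            ring
          · rw [hvelse i h0 h1, if_neg h0, if_neg h1]
            ring
      rw [Finset.sum_congr rfl (fun i _ => hpt i), Finset.sum_add_distrib]
      rw [Finset.sum_ite_eq' Finset.univ i0 (fun _ => s),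
        Finset.sum_ite_eq' Finset.univ i1 (fun _ => -s)]
      simp
    exact ⟨v ⬝ᵥ L.mulVec v, v, hv2, hv1, rfl⟩
  · rintro r ⟨v, hv2, hv1, rfl⟩
    exact h v hv2 hv1

lemma card_filter_le {N M : ℕ} (h : M + 1 ≤ N) :
    ((Finset.univ.filter fun i : Fin N => (i : ℕ) ≤ M).card) = M + 1 := by
  have heq : (Finset.univ.filter fun i : Fin N => (i : ℕ) ≤ M)
      = (Finset.range (M+1)).attachFin (fun m hm => lt_of_lt_of_le (Finset.mem_range.mp hm) h) := by
    ext i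
    simp [Finset.mem_attachFin, Nat.lt_succ_iff]
  rw [heq, Finset.card_attachFin, Finset.card_range]

lemma Ncount {n ℓ : ℕ} (R : Fin ℓ → Equiv.Perm (Fin n)) (a b : Fin n) (hab : a ≠ b) :
    (∑ j : Fin ℓ × Fin (n-1), (if a ∈ plChoiceSets R j ∧ b ∈ plChoiceSets R j then (1:ℝ) else 0))
      = ∑ k : Fin ℓ, ((min ((R k) a : ℕ) ((R k) b : ℕ) : ℝ) + 1) := by
  rw [Fintype.sum_prod_type]
  apply Finset.sum_congr rfl
  intro k _
  have hmem : ∀ (i : Fin (n-1)) (x : Fin n),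
      (x ∈ plChoiceSets R (k, i)) ↔ (i : ℕ) ≤ ((R k) x : ℕ) := by
    intro i x
    simp [plChoiceSets]
  have hcond : ∀ i : Fin (n-1),
      (a ∈ plChoiceSets R (k, i) ∧ b ∈ plChoiceSets R (k, i)) ↔
        (i : ℕ) ≤ min ((R k) a : ℕ) ((R k) b : ℕ) := by
    intro i
    rw [hmem, hmem, Nat.le_min]
  have : (∑ i : Fin (n-1), if a ∈ plChoiceSets R (k, i) ∧ b ∈ plChoiceSets R (k, i)
      then (1:ℝ) else 0)
      = ∑ i : Fin (n-1), if (i : ℕ) ≤ min ((R k) a : ℕ) ((R k) b : ℕ) then (1:ℝ) else 0 := by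
    apply Finset.sum_congr rfl
    intro i _
    by_cases h : (i : ℕ) ≤ min ((R k) a : ℕ) ((R k) b : ℕ)
    · rw [if_pos ((hcond i).mpr h), if_pos h]
    · rw [if_neg (fun hc => h ((hcond i).mp hc)), if_neg h]
  rw [this, Finset.sum_boole]
  have hminlt : min ((R k) a : ℕ) ((R k) b : ℕ) + 1 ≤ n - 1 := by
    have h1 : ((R k) a : ℕ) < n := ((R k) a).2
    have h2 : ((R k) b : ℕ) < n := ((R k) b).2
    have h3 : ((R k) a : ℕ) ≠ ((R k) b : ℕ) := by
      intro hc
      exact hab ((R k).injective (Fin.val_injective hc))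
    omega
  rw [card_filter_le hminlt]
  push_cast
  ring

end PLX

namespace PLX
open Finset

lemma sum_symm {n : ℕ} (g : Equiv.Perm (Fin n) → ℝ) :
    ∑ σ : Equiv.Perm (Fin n), g σ.symm = ∑ τ : Equiv.Perm (Fin n), g τ :=
  Equiv.sum_comp (Equiv.inv (Equiv.Perm (Fin n))) g

lemma plProb_eq_Q {n : ℕ} (θ : Fin n → ℝ) (σ : Equiv.Perm (Fin n)) :
    plProb θ σ = Qfun θ σ.symm := rfl

lemma plProb_nonneg {n : ℕ} (θ : Fin n → ℝ) (σ : Equiv.Perm (Fin n)) : 0 ≤ plProb θ σ :=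
  Qfun_nonneg θ σ.symm

lemma sum_plProb {n : ℕ} (θ : Fin n → ℝ) : ∑ σ : Equiv.Perm (Fin n), plProb θ σ = 1 := by
  rw [Finset.sum_congr rfl (fun σ _ => plProb_eq_Q θ σ), sum_symm, sum1]

lemma probA {n : ℕ} (θ : Fin n → ℝ) (T : Finset (Fin n)) (z : Fin n) (hz : z ∈ T) :
    (∑ σ : Equiv.Perm (Fin n), if ∀ t ∈ T, σ z ≤ σ t then plProb θ σ else 0)
      = Real.exp (θ z) / ∑ t ∈ T, Real.exp (θ t) := by
  calc (∑ σ : Equiv.Perm (Fin n), if ∀ t ∈ T, σ z ≤ σ t then plProb θ σ else 0)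
      = ∑ τ : Equiv.Perm (Fin n),
          (if ∀ t ∈ T, τ.symm z ≤ τ.symm t then Qfun θ τ else 0) := by
        rw [← sum_symm (fun τ : Equiv.Perm (Fin n) =>
          if ∀ t ∈ T, τ.symm z ≤ τ.symm t then Qfun θ τ else 0)]
        apply Finset.sum_congr rfl
        intro σ _
        simp only [Equiv.symm_symm]
        rfl
    _ = Real.exp (θ z) / ∑ t ∈ T, Real.exp (θ t) := lemA n θ T z hz

lemma plDensity_nonneg {n ℓ : ℕ} (θ : Fin n → ℝ) (R : Fin ℓ → Equiv.Perm (Fin n)) :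
    0 ≤ plDensity θ R :=
  Finset.prod_nonneg fun k _ => plProb_nonneg θ (R k)

lemma sum_plDensity {n ℓ : ℕ} (θ : Fin n → ℝ) :
    ∑ R : Fin ℓ → Equiv.Perm (Fin n), plDensity θ R = 1 := by
  have hpt : ∀ R : Fin ℓ → Equiv.Perm (Fin n), plDensity θ R = ∏ k, plProb θ (R k) :=
    fun _ => rfl
  rw [Finset.sum_congr rfl (fun R _ => hpt R), sum_pi_prod ℓ (plProb θ), sum_plProb, one_pow]

lemma card_filter_lt {N t : ℕ} (h : t ≤ N) :
    ((Finset.univ.filter fun i : Fin N => (i : ℕ) < t).card) = t := by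
  have heq : (Finset.univ.filter fun i : Fin N => (i : ℕ) < t)
      = (Finset.range t).attachFin
          (fun m hm => lt_of_lt_of_le (Finset.mem_range.mp hm) h) := by
    ext i
    simp [Finset.mem_attachFin]
  rw [heq, Finset.card_attachFin, Finset.card_range]

lemma min_card_eq {n : ℕ} (σ : Equiv.Perm (Fin n)) (a b : Fin n) :
    (min ((σ a : ℕ) : ℝ) ((σ b : ℕ) : ℝ))
      = ∑ z : Fin n, (if (σ z : ℕ) < (σ a : ℕ) ∧ (σ z : ℕ) < (σ b : ℕ) then (1:ℝ) else 0) := by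
  rw [Finset.sum_boole]
  have hcard : (Finset.univ.filter fun z : Fin n =>
      (σ z : ℕ) < (σ a : ℕ) ∧ (σ z : ℕ) < (σ b : ℕ)).card
      = min ((σ a : ℕ)) ((σ b : ℕ)) := by
    have hfe : (Finset.univ.filter fun z : Fin n =>
        (σ z : ℕ) < (σ a : ℕ) ∧ (σ z : ℕ) < (σ b : ℕ))
        = (Finset.univ.filter fun z : Fin n =>
            (σ z : ℕ) < min ((σ a : ℕ)) ((σ b : ℕ))) := by
      ext z
      simp [Nat.lt_min]
    rw [hfe]
    have hbij : (Finset.univ.filter fun z : Fin n =>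
        (σ z : ℕ) < min ((σ a : ℕ)) ((σ b : ℕ))).card
        = (Finset.univ.filter fun r : Fin n =>
            (r : ℕ) < min ((σ a : ℕ)) ((σ b : ℕ))).card := by
      apply Finset.card_bij (fun z _ => σ z)
      · intro z hz
        simp only [Finset.mem_filter, Finset.mem_univ, true_and] at hz ⊢
        exact hz
      · intro z1 _ z2 _ h
        exact σ.injective h
      · intro r hr
        simp only [Finset.mem_filter, Finset.mem_univ, true_and] at hr
        exact ⟨σ.symm r, by simp only [Finset.mem_filter, Finset.mem_univ, true_and,
          Equiv.apply_symm_apply]; exact hr, by simp⟩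
    rw [hbij, card_filter_lt (le_trans (min_le_left _ _) (le_of_lt (σ a).2))]
  rw [hcard]
  push_cast
  rfl

lemma mean_bound {n : ℕ} (hn : 2 ≤ n) {B : ℝ} (hB : 0 < B) (θ : Fin n → ℝ)
    (hθ : ∀ i, |θ i| ≤ B) (a b : Fin n) (hab : a ≠ b) :
    4 * alphaB B * ((n : ℝ) - 1) ≤
      ∑ σ : Equiv.Perm (Fin n),
        plProb θ σ * (min ((σ a : ℕ) : ℝ) ((σ b : ℕ) : ℝ) + 1) := by
  set β : ℝ := (1 + 2 * Real.exp (3 * B))⁻¹ with hβ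
  have hexp : (0:ℝ) < 1 + 2 * Real.exp (3 * B) := by positivity
  have hβpos : 0 < β := by rw [hβ]; positivity
  have hβ1 : β ≤ 1 := by
    have hmul : β * (1 + 2 * Real.exp (3 * B)) = 1 := inv_mul_cancel₀ (ne_of_gt hexp)
    nlinarith [Real.exp_pos (3 * B)]
  have h4α : 4 * alphaB B = β := by
    rw [alphaB, hβ]
    rw [eq_comm, inv_eq_iff_eq_inv]
    field_simp
  have hz_bound : ∀ z : Fin n, z ≠ a → z ≠ b →
      β ≤ ∑ σ : Equiv.Perm (Fin n),
        (if (σ z : ℕ) < (σ a : ℕ) ∧ (σ z : ℕ) < (σ b : ℕ) then plProb θ σ else 0) := by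
    intro z hza hzb
    set T : Finset (Fin n) := {z, a, b} with hT
    have hzT : z ∈ T := by simp [hT]
    have haT : a ∈ T := by simp [hT]
    have hbT : b ∈ T := by simp [hT]
    have hiff : ∀ σ : Equiv.Perm (Fin n),
        ((σ z : ℕ) < (σ a : ℕ) ∧ (σ z : ℕ) < (σ b : ℕ)) ↔ (∀ t ∈ T, σ z ≤ σ t) := by
      intro σ
      constructor
      · rintro ⟨h1, h2⟩ t ht
        rw [hT] at ht
        simp only [Finset.mem_insert, Finset.mem_singleton] at ht
        rcases ht with rfl | rfl | rfl
        · exact le_refl _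
        · rw [Fin.le_def]; exact le_of_lt h1
        · rw [Fin.le_def]; exact le_of_lt h2
      · intro h
        have hlea := h a haT
        have hleb := h b hbT
        rw [Fin.le_def] at hlea hleb
        have hnea : (σ z : ℕ) ≠ (σ a : ℕ) := fun hc =>
          hza (σ.injective (Fin.val_injective hc))
        have hneb : (σ z : ℕ) ≠ (σ b : ℕ) := fun hc =>
          hzb (σ.injective (Fin.val_injective hc))
        omega
    have hsum_congr : (∑ σ : Equiv.Perm (Fin n),
        (if (σ z : ℕ) < (σ a : ℕ) ∧ (σ z : ℕ) < (σ b : ℕ) then plProb θ σ else 0))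
        = ∑ σ : Equiv.Perm (Fin n), (if ∀ t ∈ T, σ z ≤ σ t then plProb θ σ else 0) := by
      apply Finset.sum_congr rfl
      intro σ _
      by_cases hc : (σ z : ℕ) < (σ a : ℕ) ∧ (σ z : ℕ) < (σ b : ℕ)
      · rw [if_pos hc, if_pos ((hiff σ).mp hc)]
      · rw [if_neg hc, if_neg (fun h => hc ((hiff σ).mpr h))]
    rw [hsum_congr, probA θ T z hzT]
    have hsumT : ∑ t ∈ T, Real.exp (θ t)
        = Real.exp (θ z) + Real.exp (θ a) + Real.exp (θ b) := by
      rw [hT, Finset.sum_insert (by simp [hza, hzb]),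
        Finset.sum_insert (by simp [hab]), Finset.sum_singleton]
      ring
    rw [hsumT]
    have hza' := abs_le.mp (hθ z)
    have haa' := abs_le.mp (hθ a)
    have hbb' := abs_le.mp (hθ b)
    have hea : Real.exp (θ a) ≤ Real.exp (θ z) * Real.exp (3 * B) := by
      rw [← Real.exp_add]
      apply Real.exp_le_exp.mpr
      linarith
    have heb : Real.exp (θ b) ≤ Real.exp (θ z) * Real.exp (3 * B) := by
      rw [← Real.exp_add]
      apply Real.exp_le_exp.mpr
      linarith
    have hDpos : (0:ℝ) < Real.exp (θ z) + Real.exp (θ a) + Real.exp (θ b) := by positivity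
    have hDle : Real.exp (θ z) + Real.exp (θ a) + Real.exp (θ b)
        ≤ Real.exp (θ z) * (1 + 2 * Real.exp (3 * B)) := by
      have : Real.exp (θ z) * (1 + 2 * Real.exp (3 * B))
          = Real.exp (θ z) + Real.exp (θ z) * Real.exp (3 * B)
            + Real.exp (θ z) * Real.exp (3 * B) := by ring
      linarith
    rw [hβ, le_div_iff₀ hDpos]
    calc (1 + 2 * Real.exp (3 * B))⁻¹ * (Real.exp (θ z) + Real.exp (θ a) + Real.exp (θ b))
        ≤ (1 + 2 * Real.exp (3 * B))⁻¹ * (Real.exp (θ z) * (1 + 2 * Real.exp (3 * B))) :=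
          mul_le_mul_of_nonneg_left hDle (inv_nonneg.mpr hexp.le)
      _ = Real.exp (θ z) := by field_simp
  have hterm_nonneg : ∀ z : Fin n, 0 ≤ ∑ σ : Equiv.Perm (Fin n),
      (if (σ z : ℕ) < (σ a : ℕ) ∧ (σ z : ℕ) < (σ b : ℕ) then plProb θ σ else 0) := by
    intro z
    apply Finset.sum_nonneg
    intro σ _
    by_cases h : (σ z : ℕ) < (σ a : ℕ) ∧ (σ z : ℕ) < (σ b : ℕ)
    · rw [if_pos h]; exact plProb_nonneg θ σ
    · rw [if_neg h]
  have key : ((n:ℝ) - 2) * β ≤ ∑ z : Fin n, ∑ σ : Equiv.Perm (Fin n),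
      (if (σ z : ℕ) < (σ a : ℕ) ∧ (σ z : ℕ) < (σ b : ℕ) then plProb θ σ else 0) := by
    have hcard2 : ({a, b} : Finset (Fin n)).card = 2 := by
      rw [Finset.card_insert_of_notMem (by simp [hab]), Finset.card_singleton]
    have hcards : (Finset.univ \ ({a, b} : Finset (Fin n))).card = n - 2 := by
      rw [Finset.card_sdiff_of_subset (Finset.subset_univ _), hcard2, Finset.card_univ,
        Fintype.card_fin]
    calc ((n:ℝ) - 2) * β
        = ∑ _z ∈ Finset.univ \ ({a, b} : Finset (Fin n)), β := by
          rw [Finset.sum_const, hcards, nsmul_eq_mul]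
          congr 1
          have : ((n - 2 : ℕ) : ℝ) = (n:ℝ) - 2 := by
            rw [Nat.cast_sub hn]
            norm_num
          rw [this]
      _ ≤ ∑ z ∈ Finset.univ \ ({a, b} : Finset (Fin n)),
            ∑ σ : Equiv.Perm (Fin n),
              (if (σ z : ℕ) < (σ a : ℕ) ∧ (σ z : ℕ) < (σ b : ℕ) then plProb θ σ else 0) := by
          apply Finset.sum_le_sum
          intro z hz
          simp only [Finset.mem_sdiff, Finset.mem_univ, true_and, Finset.mem_insert,
            Finset.mem_singleton, not_or] at hz
          exact hz_bound z hz.1 hz.2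
      _ ≤ ∑ z : Fin n, ∑ σ : Equiv.Perm (Fin n),
            (if (σ z : ℕ) < (σ a : ℕ) ∧ (σ z : ℕ) < (σ b : ℕ) then plProb θ σ else 0) :=
          Finset.sum_le_sum_of_subset_of_nonneg (Finset.sdiff_subset)
            (fun z _ _ => hterm_nonneg z)
  have hexpand : (∑ σ : Equiv.Perm (Fin n),
      plProb θ σ * (min ((σ a : ℕ) : ℝ) ((σ b : ℕ) : ℝ) + 1))
      = (∑ z : Fin n, ∑ σ : Equiv.Perm (Fin n),
          (if (σ z : ℕ) < (σ a : ℕ) ∧ (σ z : ℕ) < (σ b : ℕ) then plProb θ σ else 0)) + 1 := by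
    have hpt : ∀ σ : Equiv.Perm (Fin n),
        plProb θ σ * (min ((σ a : ℕ) : ℝ) ((σ b : ℕ) : ℝ) + 1)
        = (∑ z : Fin n,
            (if (σ z : ℕ) < (σ a : ℕ) ∧ (σ z : ℕ) < (σ b : ℕ) then plProb θ σ else 0))
          + plProb θ σ := by
      intro σ
      rw [mul_add, mul_one, min_card_eq σ a b, Finset.mul_sum]
      congr 1
      apply Finset.sum_congr rfl
      intro z _
      rw [mul_boole]
    rw [Finset.sum_congr rfl (fun σ _ => hpt σ), Finset.sum_add_distrib, sum_plProb,
      Finset.sum_comm]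
  rw [hexpand, h4α]
  nlinarith [key, hβ1, hβpos]

lemma pair_bad_bound {n ℓ : ℕ} (hn : 2 ≤ n) {B : ℝ} (hB : 0 < B) (θ : Fin n → ℝ)
    (hθ : ∀ i, |θ i| ≤ B) (a b : Fin n) (hab : a ≠ b) :
    probOf (plDensity θ) {R : Fin ℓ → Equiv.Perm (Fin n) |
        (∑ k, (min (((R k) a : ℕ) : ℝ) (((R k) b : ℕ) : ℝ) + 1))
          < alphaB B * ℓ * ((n:ℝ) - 1)}
      ≤ Real.exp (-(2 * alphaB B ^ 2 * ℓ)) := by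
  have hαpos : 0 < alphaB B := by rw [alphaB]; positivity
  set α : ℝ := alphaB B with hα
  set d : ℝ := (n:ℝ) - 1 with hd
  have hn' : (2:ℝ) ≤ (n:ℝ) := by exact_mod_cast hn
  have hdpos : 0 < d := by rw [hd]; linarith
  set t : ℝ := 2 * α / d with ht
  have htpos : 0 ≤ t := by positivity
  have hfb : ∀ σ : Equiv.Perm (Fin n),
      (min ((σ a : ℕ) : ℝ) ((σ b : ℕ) : ℝ) + 1) ≤ d := by
    intro σ
    have h3 : (σ a : ℕ) ≠ (σ b : ℕ) := fun hc =>
      hab (σ.injective (Fin.val_injective hc))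
    have h1 : (σ a : ℕ) < n := (σ a).2
    have h2 : (σ b : ℕ) < n := (σ b).2
    have h4 : min ((σ a : ℕ)) ((σ b : ℕ)) + 2 ≤ n := by omega
    have h5 : ((min ((σ a : ℕ)) ((σ b : ℕ)) : ℕ) : ℝ) + 2 ≤ (n:ℝ) := by
      exact_mod_cast h4
    rw [hd]
    push_cast at h5 ⊢
    rw [← Nat.cast_min] at *
    push_cast at h5 ⊢
    linarith
  have hf0 : ∀ σ : Equiv.Perm (Fin n),
      0 ≤ (min ((σ a : ℕ) : ℝ) ((σ b : ℕ) : ℝ) + 1) := by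
    intro σ
    positivity
  have hmean := mean_bound hn hB θ hθ a b hab
  have hmgf := mgf_bound (plProb θ)
    (fun σ => min ((σ a : ℕ) : ℝ) ((σ b : ℕ) : ℝ) + 1)
    (plProb_nonneg θ) (sum_plProb θ) d (4 * α * d) t hf0 hfb
    (by rw [hα]; calc 4 * alphaB B * d = 4 * alphaB B * ((n:ℝ)-1) := by rw [hd]
          _ ≤ _ := hmean) htpos
  have hcb := chernoff_bound (plProb θ)
    (fun σ => min ((σ a : ℕ) : ℝ) ((σ b : ℕ) : ℝ) + 1) ℓ
    (plProb_nonneg θ) (α * ℓ * d) t htpos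
  have hstep : probOf (plDensity θ) {R : Fin ℓ → Equiv.Perm (Fin n) |
      (∑ k, (min (((R k) a : ℕ) : ℝ) (((R k) b : ℕ) : ℝ) + 1)) < α * ℓ * d}
      = (∑ R : Fin ℓ → Equiv.Perm (Fin n),
          if (∑ k, (min (((R k) a : ℕ) : ℝ) (((R k) b : ℕ) : ℝ) + 1)) < α * ℓ * d
          then (∏ k, plProb θ (R k)) else 0) := by
    rw [probOf]
    apply Finset.sum_congr rfl
    intro R _
    rfl
  calc probOf (plDensity θ) {R : Fin ℓ → Equiv.Perm (Fin n) |
        (∑ k, (min (((R k) a : ℕ) : ℝ) (((R k) b : ℕ) : ℝ) + 1)) < α * ℓ * d}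
      = (∑ R : Fin ℓ → Equiv.Perm (Fin n),
          if (∑ k, (min (((R k) a : ℕ) : ℝ) (((R k) b : ℕ) : ℝ) + 1)) < α * ℓ * d
          then (∏ k, plProb θ (R k)) else 0) := hstep
    _ ≤ Real.exp (t * (α * ℓ * d)) *
          (∑ σ : Equiv.Perm (Fin n), plProb θ σ *
            Real.exp (-(t * (min ((σ a : ℕ) : ℝ) ((σ b : ℕ) : ℝ) + 1)))) ^ ℓ := hcb
    _ ≤ Real.exp (t * (α * ℓ * d)) * (Real.exp (-(t * (4 * α * d)) + t^2 * d^2)) ^ ℓ := by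
        apply mul_le_mul_of_nonneg_left _ (Real.exp_pos _).le
        apply pow_le_pow_left₀ _ hmgf
        apply Finset.sum_nonneg
        intro σ _
        exact mul_nonneg (plProb_nonneg θ σ) (Real.exp_pos _).le
    _ = Real.exp (t * (α * ℓ * d) + ℓ * (-(t * (4 * α * d)) + t^2 * d^2)) := by
        rw [← Real.exp_nat_mul, ← Real.exp_add]
    _ = Real.exp (-(2 * α ^ 2 * ℓ)) := by
        congr 1
        rw [ht]
        field_simp
        ring
end PLX

/-- spectral lower bound for the random PL Laplacian: for `ℓ`
i.i.d. PL(θ*) rankings of `n` items with `θ* ∈ Θ_B`, the comparison Laplacian `L`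
built from the `ℓ(n−1)` repeated-selection choice sets satisfies
`λ₂(L) ≥ α_B·n` with probability at least `1 − n²·exp(−α_B²·ℓ)`. -/
theorem pl_laplacian_lambda2_bound
    (n ℓ : ℕ) (B : ℝ) (θs : Fin n → ℝ)
    (hB : 0 < B) (hn : 2 ≤ n)
    (hθs : θs ∈ ThetaB n B) :
    1 - (n : ℝ) ^ 2 * Real.exp (-(alphaB B ^ 2) * (ℓ : ℝ)) ≤
      probOf (plDensity θs)
        {R : Fin ℓ → Equiv.Perm (Fin n) |
          alphaB B * (n : ℝ) ≤ lambda2 (mnlLaplacian (plChoiceSets R))} := by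
  classical
  obtain ⟨hθB, -⟩ := hθs
  have hαpos : 0 < alphaB B := by rw [alphaB]; positivity
  have hn' : (2:ℝ) ≤ (n:ℝ) := by exact_mod_cast hn
  set E : Set (Fin ℓ → Equiv.Perm (Fin n)) :=
    {R : Fin ℓ → Equiv.Perm (Fin n) |
      alphaB B * (n : ℝ) ≤ lambda2 (mnlLaplacian (plChoiceSets R))} with hE
  have hpnn : ∀ R : Fin ℓ → Equiv.Perm (Fin n), 0 ≤ plDensity θs R :=
    fun R => PLX.plDensity_nonneg θs R
  rcases Nat.eq_zero_or_pos ℓ with hl0 | hlpos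
  · subst hl0
    have h1 : 0 ≤ probOf (plDensity θs) E := PLX.probOf_nonneg _ hpnn E
    have h2 : (1:ℝ) ≤ (n : ℝ) ^ 2 * Real.exp (-(alphaB B ^ 2) * ((0:ℕ) : ℝ)) := by
      simp only [Nat.cast_zero, mul_zero, Real.exp_zero, mul_one]
      nlinarith
    linarith
  · set d : ℝ := (n:ℝ) - 1 with hd
    have hdpos : 0 < d := by rw [hd]; linarith
    have hlpos' : (0:ℝ) < (ℓ:ℝ) := by exact_mod_cast hlpos
    set c : ℝ := alphaB B * ℓ * d with hc
    set F : Fin n × Fin n → Set (Fin ℓ → Equiv.Perm (Fin n)) := fun ab =>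
      {R : Fin ℓ → Equiv.Perm (Fin n) |
        (∑ k, (min (((R k) ab.1 : ℕ) : ℝ) (((R k) ab.2 : ℕ) : ℝ) + 1)) < c} with hF
    have hcover : ∀ R ∈ Eᶜ, ∃ ab ∈ Finset.univ.offDiag, R ∈ F ab := by
      intro R hR
      by_contra hno
      push_neg at hno
      apply hR
      rw [hE]
      show alphaB B * (n : ℝ) ≤ lambda2 (mnlLaplacian (plChoiceSets R))
      apply PLX.lambda2_ge hn
      intro v hv2 hv1
      have hcardk : Fintype.card (Fin ℓ × Fin (n-1)) = ℓ * (n-1) := by simp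
      have hm : (0:ℝ) < (Fintype.card (Fin ℓ × Fin (n-1)) : ℝ) := by
        rw [hcardk]
        have : 0 < ℓ * (n - 1) := Nat.mul_pos hlpos (by omega)
        exact_mod_cast this
      have hN : ∀ a b : Fin n, a ≠ b →
          c ≤ ∑ j, (if a ∈ plChoiceSets R j ∧ b ∈ plChoiceSets R j then (1:ℝ) else 0) := by
        intro a b hab
        rw [PLX.Ncount R a b hab]
        have hnot := hno (a, b) (Finset.mem_offDiag.mpr
          ⟨Finset.mem_univ _, Finset.mem_univ _, hab⟩)
        rw [hF] at hnot
        simp only [Set.mem_setOf_eq, not_lt] at hnot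
        exact hnot
      have hq := PLX.quad_lower (plChoiceSets R) c (by positivity) hm hN v hv2 hv1
      have hmeq : (Fintype.card (Fin ℓ × Fin (n-1)) : ℝ) = (ℓ:ℝ) * d := by
        rw [hcardk, Nat.cast_mul, Nat.cast_sub (by omega : 1 ≤ n), hd]
        norm_num
      rw [hmeq, hc] at hq
      have heq : alphaB B * (ℓ:ℝ) * d * (n:ℝ) / ((ℓ:ℝ) * d) = alphaB B * (n:ℝ) := by
        field_simp
      rw [heq] at hq
      exact hq
    have hcompl := PLX.probOf_add_compl (plDensity θs) (PLX.sum_plDensity θs) E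
    have hunion := PLX.probOf_le_sum_of_cover (plDensity θs) hpnn Eᶜ F
      Finset.univ.offDiag hcover
    have heach : ∀ ab ∈ (Finset.univ : Finset (Fin n)).offDiag,
        probOf (plDensity θs) (F ab) ≤ Real.exp (-(2 * alphaB B ^ 2 * ℓ)) := by
      intro ab hab
      have hne := (Finset.mem_offDiag.mp hab).2.2
      exact PLX.pair_bad_bound hn hB θs hθB ab.1 ab.2 hne
    have hsum : ∑ ab ∈ (Finset.univ : Finset (Fin n)).offDiag,
        probOf (plDensity θs) (F ab)
        ≤ ((Finset.univ : Finset (Fin n)).offDiag.card : ℝ) *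
          Real.exp (-(2 * alphaB B ^ 2 * ℓ)) := by
      calc ∑ ab ∈ (Finset.univ : Finset (Fin n)).offDiag,
            probOf (plDensity θs) (F ab)
          ≤ ∑ _ab ∈ (Finset.univ : Finset (Fin n)).offDiag,
              Real.exp (-(2 * alphaB B ^ 2 * ℓ)) := Finset.sum_le_sum heach
        _ = _ := by rw [Finset.sum_const, nsmul_eq_mul]
    have hcard : ((Finset.univ : Finset (Fin n)).offDiag.card : ℝ) ≤ (n:ℝ)^2 := by
      rw [Finset.offDiag_card, Finset.card_univ, Fintype.card_fin]
      have h1 : n * n - n ≤ n * n := Nat.sub_le _ _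
      have h2 : ((n * n - n : ℕ) : ℝ) ≤ ((n * n : ℕ) : ℝ) := by exact_mod_cast h1
      push_cast at h2
      nlinarith
    have hexp_le : Real.exp (-(2 * alphaB B ^ 2 * ℓ)) ≤ Real.exp (-(alphaB B ^ 2) * ℓ) := by
      apply Real.exp_le_exp.mpr
      nlinarith [sq_nonneg (alphaB B), hlpos'.le]
    have hfinal : ∑ ab ∈ (Finset.univ : Finset (Fin n)).offDiag,
        probOf (plDensity θs) (F ab)
        ≤ (n:ℝ)^2 * Real.exp (-(alphaB B ^ 2) * ℓ) := by
      calc ∑ ab ∈ (Finset.univ : Finset (Fin n)).offDiag,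
            probOf (plDensity θs) (F ab)
          ≤ ((Finset.univ : Finset (Fin n)).offDiag.card : ℝ) *
              Real.exp (-(2 * alphaB B ^ 2 * ℓ)) := hsum
        _ ≤ (n:ℝ)^2 * Real.exp (-(alphaB B ^ 2) * ℓ) := by
            apply mul_le_mul hcard hexp_le (Real.exp_pos _).le (by positivity)
    linarith


end
end

section
/- Let σ be a random full ranking of n items drawn from the Plackett–Luce model with parameter θ ∈ ℝ^n satisfying ‖θ‖_∞ ≤ B. Then for any two distinct items i and j and any δ ∈ [0,1), the probability that min{σ(i), σ(j)} ≥ δ·n is at least 1 − 2e^{3B}·δ/(1−δ). -/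
open scoped Classical

noncomputable section

/-- The 1-based rank of item `x` under ranking `σ`, as a real number. -/
def rank1 {n : ℕ} (σ : Equiv.Perm (Fin n)) (x : Fin n) : ℝ := ((σ x : ℕ) : ℝ) + 1

/-!
Read a Plackett–Luce ranking as a sequence of draws: the top item is drawn with probability
proportional to its weight `e^{θ}`, and the remaining items then form a Plackett–Luce ranking.
While item `x` is undrawn at step `k`, at least `n - k` items of weight `≥ e^{-B}` remain, so
conditioning on the first draw and inducting on `n` gives `P(σ(x) = k + 1) ≤ e^{2B} / (n - k)`.
Summing over the at most `δn` positions `k` with `k + 1 < δn` bounds `P(σ(x) < δn)` by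
`e^{2B} δ / (1 - δ)`, and a union bound over `i` and `j` gives the claim.
-/

section ProbOf

variable {α : Type*} [Fintype α] (p : α → ℝ)

lemma probOf_mono (hp : ∀ y, 0 ≤ p y) {E F : Set α} (h : E ⊆ F) :
    probOf p E ≤ probOf p F :=
  Finset.sum_le_sum fun y _ => by
    by_cases hE : y ∈ E
    · simp [hE, h hE]
    · by_cases hF : y ∈ F <;> simp [hE, hF, hp y]

lemma probOf_union_le (hp : ∀ y, 0 ≤ p y) (E F : Set α) :
    probOf p (E ∪ F) ≤ probOf p E + probOf p F := by
  rw [probOf, probOf, probOf, ← Finset.sum_add_distrib]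
  refine Finset.sum_le_sum fun y _ => ?_
  by_cases hE : y ∈ E <;> by_cases hF : y ∈ F <;> simp [hE, hF, hp y]

lemma probOf_compl (E : Set α) : probOf p Eᶜ = probOf p Set.univ - probOf p E := by
  rw [eq_sub_iff_add_eq, probOf, probOf, probOf, ← Finset.sum_add_distrib]
  refine Finset.sum_congr rfl fun y _ => ?_
  by_cases hE : y ∈ E <;> simp [hE]

lemma probOf_setOf_mem_eq_sum {β : Type*} (f : α → β) (s : Finset β) :
    probOf p {y | f y ∈ s} = ∑ k ∈ s, probOf p {y | f y = k} := by
  simp only [probOf, Set.mem_ofPred_eq]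
  rw [Finset.sum_comm]
  refine Finset.sum_congr rfl fun y _ => ?_
  simp [Finset.sum_ite_eq]

lemma probOf_comp_equiv {β : Type*} [Fintype β] (e : α ≃ β) (q : β → ℝ) (E : Set β) :
    probOf (q ∘ e) (e ⁻¹' E) = probOf q E :=
  Equiv.sum_comp e fun z => if z ∈ E then q z else 0

end ProbOf

section PlackettLuce

open Equiv

variable {n : ℕ}

/-- Plackett–Luce weight of the ordering `τ`, which lists the items from the top:
`τ k` is the item in position `k`, so `τ` is the inverse of a ranking. -/
def plWeight (w : Fin n → ℝ) (τ : Perm (Fin n)) : ℝ :=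
  ∏ i, w (τ i) / ∑ j ∈ Finset.univ.filter (fun j => i ≤ j), w (τ j)

lemma plProb_eq_plWeight_comp_inv (θ : Fin n → ℝ) :
    plProb θ = plWeight (fun x => Real.exp (θ x)) ∘ Equiv.inv (Perm (Fin n)) :=
  rfl

lemma plWeight_nonneg {w : Fin n → ℝ} (hw : ∀ x, 0 ≤ w x) (τ : Perm (Fin n)) :
    0 ≤ plWeight w τ :=
  Finset.prod_nonneg fun _ _ => div_nonneg (hw _) (Finset.sum_nonneg fun _ _ => hw _)

/-- Choosing the top item `p` first leaves a Plackett–Luce ordering of the other items,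
relabelled by `Fin n` through `y ↦ swap 0 p y.succ`. -/
lemma plWeight_decomposeFin_symm (w : Fin (n + 1) → ℝ) (p : Fin (n + 1)) (e : Perm (Fin n)) :
    plWeight w (Perm.decomposeFin.symm (p, e)) =
      w p / (∑ x, w x) * plWeight (fun y => w (swap 0 p y.succ)) e := by
  rw [plWeight, Fin.prod_univ_succ]
  congr 1
  · rw [Perm.decomposeFin_symm_apply_zero, Finset.filter_true_of_mem fun j _ => Fin.zero_le j]
    exact congrArg _ (Equiv.sum_comp _ w)
  · refine Finset.prod_congr rfl fun x _ => ?_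
    rw [Perm.decomposeFin_symm_apply_succ, Finset.sum_filter, Finset.sum_filter,
      Fin.sum_univ_succ]
    simp [Fin.succ_ne_zero, Fin.succ_le_succ_iff, Perm.decomposeFin_symm_apply_succ]

lemma probOf_plWeight_succ (w : Fin (n + 1) → ℝ) (E : Set (Perm (Fin (n + 1)))) :
    probOf (plWeight w) E = ∑ p, w p / (∑ x, w x) *
      probOf (plWeight fun y => w (swap 0 p y.succ)) {e | Perm.decomposeFin.symm (p, e) ∈ E} := by
  rw [probOf, ← Equiv.sum_comp Perm.decomposeFin.symm, Fintype.sum_prod_type]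
  refine Finset.sum_congr rfl fun p _ => ?_
  rw [probOf, Finset.mul_sum]
  refine Finset.sum_congr rfl fun e _ => ?_
  rw [plWeight_decomposeFin_symm, Set.mem_ofPred_eq, mul_ite, mul_zero]

lemma sum_div_sum_self {w : Fin (n + 1) → ℝ} (hw : ∀ x, 0 < w x) :
    ∑ p, w p / ∑ x, w x = 1 := by
  rw [← Finset.sum_div, div_self (Finset.sum_pos (fun x _ => hw x) Finset.univ_nonempty).ne']

theorem probOf_plWeight_univ {w : Fin n → ℝ} (hw : ∀ x, 0 < w x) :
    probOf (plWeight w) Set.univ = 1 := by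
  induction n with
  | zero => simp [probOf, plWeight, Finset.univ_unique]
  | succ n ih =>
    simp only [probOf_plWeight_succ, Set.mem_univ, Set.ofPred_true, ih fun y => hw _, mul_one]
    exact sum_div_sum_self hw

lemma probOf_plWeight_apply_zero {w : Fin (n + 1) → ℝ} (hw : ∀ x, 0 < w x) (x : Fin (n + 1)) :
    probOf (plWeight w) {τ | τ 0 = x} = w x / ∑ y, w y := by
  have hfirst : ∀ p, probOf (plWeight fun y => w (swap 0 p y.succ))
      {e | Perm.decomposeFin.symm (p, e) ∈ {τ | τ 0 = x}} = if p = x then 1 else 0 := by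
    intro p
    by_cases hp : p = x
    · simp [hp, probOf_plWeight_univ fun y => hw _]
    · simp [hp, probOf]
  simp only [probOf_plWeight_succ, hfirst, mul_ite, mul_one, mul_zero, Finset.sum_ite_eq',
    Finset.mem_univ, if_true]

theorem probOf_plWeight_apply_eq_le {a b : ℝ} (ha : 0 < a) {w : Fin n → ℝ}
    (haw : ∀ x, a ≤ w x) (hwb : ∀ x, w x ≤ b) (k x : Fin n) :
    probOf (plWeight w) {τ | τ k = x} ≤ b / ((n - k : ℝ) * a) := by
  induction n with
  | zero => exact k.elim0
  | succ n ih =>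
    have hw : ∀ y, 0 < w y := fun y => ha.trans_le (haw y)
    have hb : 0 ≤ b := (hw x).le.trans (hwb x)
    have hsum : (n + 1 : ℝ) * a ≤ ∑ y, w y := by
      simpa using Finset.card_nsmul_le_sum Finset.univ w a fun y _ => haw y
    induction k using Fin.cases with
    | zero =>
      rw [probOf_plWeight_apply_zero hw]
      simpa using div_le_div₀ hb (hwb x) (by positivity) hsum
    | succ k =>
      have hk : (k : ℝ) < n := by exact_mod_cast k.isLt
      set C := b / ((n - k : ℝ) * a)
      have hC : 0 ≤ C := div_nonneg hb (mul_nonneg (sub_nonneg.mpr hk.le) ha.le)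
      -- after the first draw `p`, item `x` must sit in position `k` of the remaining ordering
      have hrest : ∀ p, probOf (plWeight fun y => w (swap 0 p y.succ))
          {e | Perm.decomposeFin.symm (p, e) ∈ {τ | τ k.succ = x}} ≤ C := by
        intro p
        simp only [Set.mem_ofPred_eq, Perm.decomposeFin_symm_apply_succ, swap_apply_eq_iff]
        obtain h0 | ⟨y, hy⟩ := Fin.eq_zero_or_eq_succ (swap 0 p x)
        · simpa [h0, Fin.succ_ne_zero, probOf] using hC
        · simpa only [hy, Fin.succ_inj] using ih (fun _ => haw _) (fun _ => hwb _) k y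
      calc probOf (plWeight w) {τ | τ k.succ = x}
          ≤ ∑ p, w p / (∑ y, w y) * C := by
            rw [probOf_plWeight_succ]
            exact Finset.sum_le_sum fun p _ => mul_le_mul_of_nonneg_left (hrest p)
              (div_nonneg (hw p).le (Finset.sum_nonneg fun y _ => (hw y).le))
        _ = C := by rw [← Finset.sum_mul, sum_div_sum_self hw, one_mul]
        _ = _ := by simp only [C, Fin.val_succ]; push_cast; ring_nf

end PlackettLuce

section RankTail

variable {n : ℕ} {B : ℝ} {θ : Fin n → ℝ}

lemma probOf_plProb_apply_eq_le (hθ : ∀ x, |θ x| ≤ B) (x k : Fin n) :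
    probOf (plProb θ) {σ | σ x = k} ≤ Real.exp (2 * B) / (n - k) := by
  have hinv : probOf (plProb θ) {σ | σ x = k} =
      probOf (plWeight fun y => Real.exp (θ y)) {τ | τ k = x} := by
    have hset : {σ : Equiv.Perm (Fin n) | σ x = k} = Equiv.inv _ ⁻¹' {τ | τ k = x} := by
      ext σ
      exact σ.eq_symm_apply.symm.trans eq_comm
    rw [plProb_eq_plWeight_comp_inv, hset, probOf_comp_equiv]
  calc probOf (plProb θ) {σ | σ x = k}
      ≤ Real.exp B / ((n - k) * Real.exp (-B)) := hinv ▸ probOf_plWeight_apply_eq_le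
        (Real.exp_pos _) (fun y => Real.exp_le_exp.mpr (neg_le_of_abs_le (hθ y)))
        (fun y => Real.exp_le_exp.mpr (le_of_abs_le (hθ y))) k x
    _ = Real.exp (2 * B) / (n - k) := by
      rw [mul_comm, ← div_div, div_eq_mul_inv _ (Real.exp _), ← Real.exp_neg, neg_neg,
        ← Real.exp_add, two_mul]

lemma card_filter_add_one_lt_le {t : ℝ} (ht : 0 ≤ t) :
    ((Finset.univ.filter fun k : Fin n => (k : ℝ) + 1 < t).card : ℝ) ≤ t := by
  have hcard : (Finset.univ.filter fun k : Fin n => (k : ℝ) + 1 < t).card ≤ ⌊t⌋₊ := by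
    refine (Finset.card_le_card_of_injOn Fin.val (fun k hk => ?_)
      Fin.val_injective.injOn).trans_eq (Finset.card_range _)
    have hk : (k : ℝ) + 1 < t := (Finset.mem_filter.mp hk).2
    rw [Finset.mem_coe, Finset.mem_range]
    exact Nat.lt_of_succ_le (Nat.le_floor (by exact_mod_cast hk.le))
  exact (Nat.cast_le.mpr hcard).trans (Nat.floor_le ht)

lemma probOf_plProb_rank1_lt_le (hθ : ∀ x, |θ x| ≤ B) (x : Fin n) {δ : ℝ} (hδ0 : 0 ≤ δ)
    (hδ1 : δ < 1) :
    probOf (plProb θ) {σ | rank1 σ x < δ * n} ≤ Real.exp (2 * B) * δ / (1 - δ) := by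
  have hn : (0 : ℝ) < n := by exact_mod_cast x.pos
  set s := Finset.univ.filter fun k : Fin n => (k : ℝ) + 1 < δ * n
  have hrank : {σ : Equiv.Perm (Fin n) | rank1 σ x < δ * n} = {σ | σ x ∈ s} := by
    ext σ
    simp [s, rank1]
  have hterm : ∀ k ∈ s,
      probOf (plProb θ) {σ | σ x = k} ≤ Real.exp (2 * B) / (n * (1 - δ)) := by
    intro k hk
    have hk : (k : ℝ) + 1 < δ * n := (Finset.mem_filter.mp hk).2
    exact (probOf_plProb_apply_eq_le hθ x k).trans
      (div_le_div_of_nonneg_left (Real.exp_pos _).le (by nlinarith) (by linarith))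
  calc probOf (plProb θ) {σ | rank1 σ x < δ * n}
      = ∑ k ∈ s, probOf (plProb θ) {σ | σ x = k} := by rw [hrank, probOf_setOf_mem_eq_sum]
    _ ≤ s.card * (Real.exp (2 * B) / (n * (1 - δ))) := by
      simpa using Finset.sum_le_sum hterm
    _ ≤ δ * n * (Real.exp (2 * B) / (n * (1 - δ))) := by
      gcongr
      exact card_filter_add_one_lt_le (by positivity)
    _ = Real.exp (2 * B) * δ / (1 - δ) := by
      field_simp

end RankTail

theorem pl_min_rank_tail_bound_general
    (n : ℕ) (B : ℝ) (θ : Fin n → ℝ) (hθ : ∀ i, |θ i| ≤ B)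
    (i j : Fin n) (δ : ℝ) (hδ0 : 0 ≤ δ) (hδ1 : δ < 1) :
    1 - 2 * Real.exp (3 * B) * δ / (1 - δ) ≤
      probOf (plProb θ)
        {σ : Equiv.Perm (Fin n) | δ * (n : ℝ) ≤ min (rank1 σ i) (rank1 σ j)} := by
  have hp : ∀ σ, 0 ≤ plProb θ σ := by
    rw [plProb_eq_plWeight_comp_inv]
    exact fun σ => plWeight_nonneg (fun _ => (Real.exp_pos _).le) σ⁻¹
  have htotal : probOf (plProb θ) Set.univ = 1 := by
    rw [plProb_eq_plWeight_comp_inv, ← Set.preimage_univ (f := Equiv.inv _), probOf_comp_equiv,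
      probOf_plWeight_univ fun x => Real.exp_pos (θ x)]
  have hcompl : {σ : Equiv.Perm (Fin n) | δ * (n : ℝ) ≤ min (rank1 σ i) (rank1 σ j)}ᶜ ⊆
      {σ | rank1 σ i < δ * n} ∪ {σ | rank1 σ j < δ * n} := by
    intro σ hσ
    simpa only [Set.mem_compl_iff, Set.mem_union, Set.mem_ofPred_eq, le_min_iff, not_and_or,
      not_le] using hσ
  have hunion := (probOf_mono _ hp hcompl).trans (probOf_union_le _ hp _ _)
  rw [probOf_compl, htotal] at hunion
  have hexp : Real.exp (2 * B) * δ / (1 - δ) ≤ Real.exp (3 * B) * δ / (1 - δ) := by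
    have hB : 0 ≤ B := (abs_nonneg _).trans (hθ i)
    gcongr
    linarith
  linarith [probOf_plProb_rank1_lt_le hθ i hδ0 hδ1, probOf_plProb_rank1_lt_le hθ j hδ0 hδ1,
    mul_div_assoc (2 * Real.exp (3 * B)) δ (1 - δ), mul_div_assoc (Real.exp (3 * B)) δ (1 - δ)]

/-- for a PL(θ) ranking with `‖θ‖_∞ ≤ B`, distinct items `i ≠ j`
and `δ ∈ [0,1)`, `P(min{σ(i),σ(j)} ≥ δ·n) ≥ 1 − 2e^{3B}·δ/(1−δ)`. -/
theorem pl_min_rank_tail_bound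
    (n : ℕ) (B : ℝ) (θ : Fin n → ℝ) (hθ : ∀ i, |θ i| ≤ B)
    (i j : Fin n) (hij : i ≠ j) (δ : ℝ) (hδ0 : 0 ≤ δ) (hδ1 : δ < 1) :
    1 - 2 * Real.exp (3 * B) * δ / (1 - δ) ≤
      probOf (plProb θ)
        {σ : Equiv.Perm (Fin n) | δ * (n : ℝ) ≤ min (rank1 σ i) (rank1 σ j)} :=
  pl_min_rank_tail_bound_general n B θ hθ i j δ hδ0 hδ1

end
end

section
/- Let σ be a random full ranking of n items drawn from the Plackett–Luce model with parameter θ ∈ ℝ^n satisfying ‖θ‖_∞ ≤ B. Then for any two distinct items i and j, E[min{σ(i), σ(j)}] ≥ (1/2)·(n/(1+2e^{3B}) + 1). -/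
open scoped Classical

noncomputable section

/-!
Writing `min σ(i) σ(j) = 1 + #{x | x is ranked above both i and j}`, linearity of expectation
gives `E[min σ(i) σ(j)] = 1 + ∑ₓ P(x precedes i and j)`. By Luce's choice axiom, which follows
by induction on the item set after conditioning on the first item drawn, this probability is
`e^{θₓ} / (e^{θₓ} + e^{θᵢ} + e^{θⱼ}) ≥ 1 / (1 + 2e^{3B})` for `x ∉ {i, j}`. Hence the expectation
is at least `1 + (n - 2) / (1 + 2e^{3B})`, which dominates the bound since `1 + 2e^{3B} ≥ 3`.
-/

open Finset

theorem probOf_nonneg {α : Type*} [Fintype α] {p : α → ℝ} (hp : ∀ y, 0 ≤ p y) (E : Set α) :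
    0 ≤ probOf p E :=
  sum_nonneg fun y _ => by split_ifs <;> simp [hp y]

theorem card_sub_mul_le_sum {ι : Type*} [Fintype ι] [DecidableEq ι] (s : Finset ι) {f : ι → ℝ}
    {c : ℝ} (hf0 : ∀ x, 0 ≤ f x) (hf : ∀ x ∉ s, c ≤ f x) :
    ((Fintype.card ι : ℝ) - #s) * c ≤ ∑ x, f x :=
  calc ((Fintype.card ι : ℝ) - #s) * c = #sᶜ • c := by
        rw [card_compl, nsmul_eq_mul, Nat.cast_sub (card_le_univ s)]
    _ ≤ ∑ x ∈ sᶜ, f x := card_nsmul_le_sum _ _ _ fun x hx => hf x (mem_compl.1 hx)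
    _ ≤ ∑ x, f x := sum_le_sum_of_subset_of_nonneg (subset_univ _) fun x _ _ => hf0 x

theorem one_div_one_add_two_mul_le_div_add_add {a b c K : ℝ} (ha : 0 < a) (hb : 0 ≤ b)
    (hc : 0 ≤ c) (hbK : b ≤ K * a) (hcK : c ≤ K * a) : 1 / (1 + 2 * K) ≤ a / (a + b + c) := by
  have hK : 0 ≤ K := nonneg_of_mul_nonneg_left (hb.trans hbK) ha
  rw [div_le_div_iff₀ (by positivity) (by positivity)]
  linarith

namespace PlackettLuce

section Lists

variable {α : Type*}

/-- The probability that Plackett–Luce sampling with weights `w`, drawing from the items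
of `l`, draws them in the order of `l`. -/
def listProb (w : α → ℝ) : List α → ℝ
  | [] => 1
  | a :: l => w a / (w a + (l.map w).sum) * listProb w l

variable {w : α → ℝ}

theorem listProb_ofFn {n : ℕ} (f : Fin n → α) :
    listProb w (List.ofFn f) = ∏ i, w (f i) / ∑ j with i ≤ j, w (f j) := by
  induction n with
  | zero => simp [listProb]
  | succ n ih =>
    rw [List.ofFn_succ, listProb, ih, Fin.prod_univ_succ, List.map_ofFn, List.sum_ofFn]
    congr 2
    · simp [Fin.sum_univ_succ]
    · ext i
      simp [sum_filter, Fin.sum_univ_succ, Fin.succ_le_succ_iff]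

variable [DecidableEq α]

def orderings (s : Finset α) : Finset (List α) := s.toList.permutations.toFinset

theorem mem_orderings {s : Finset α} {l : List α} :
    l ∈ orderings s ↔ l.Nodup ∧ l.toFinset = s := by
  rw [orderings, List.mem_toFinset, List.mem_permutations]
  constructor
  · intro hl
    exact ⟨hl.nodup_iff.2 s.nodup_toList, (List.toFinset_eq_of_perm _ _ hl).trans s.toList_toFinset⟩
  · rintro ⟨hnd, rfl⟩
    exact List.perm_of_nodup_nodup_toFinset_eq hnd (nodup_toList _) (by simp)

theorem card_orderings (s : Finset α) : #(orderings s) = (#s).factorial := by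
  rw [orderings, List.toFinset_card_of_nodup (List.nodup_permutations _ s.nodup_toList),
    List.length_permutations, length_toList]

theorem orderings_empty : orderings (∅ : Finset α) = {[]} := by
  simp [orderings]

theorem orderings_eq_biUnion {s : Finset α} (hs : s.Nonempty) :
    orderings s = s.biUnion fun a => (orderings (s.erase a)).image (a :: ·) := by
  ext (_ | ⟨a, t⟩)
  · simp [mem_orderings, hs.ne_empty.symm]
  · simp only [mem_biUnion, mem_image, mem_orderings, List.cons.injEq, List.nodup_cons,
      List.toFinset_cons]
    constructor
    · rintro ⟨⟨hat, ht⟩, rfl⟩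
      exact ⟨a, mem_insert_self _ _, t, ⟨ht, (erase_insert (by simpa using hat)).symm⟩, rfl, rfl⟩
    · rintro ⟨b, hb, u, ⟨hu, hus⟩, rfl, rfl⟩
      refine ⟨⟨fun hb' => ?_, hu⟩, by rw [hus, insert_erase hb]⟩
      simpa [hus] using List.mem_toFinset.2 hb'

theorem sum_orderings {s : Finset α} (hs : s.Nonempty) (F : List α → ℝ) :
    ∑ l ∈ orderings s, F l = ∑ a ∈ s, ∑ t ∈ orderings (s.erase a), F (a :: t) := by
  rw [orderings_eq_biUnion hs, sum_biUnion]
  · exact sum_congr rfl fun a _ => sum_image fun _ _ _ _ h => List.cons_injective h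
  · intro a _ b _ hab
    simp only [Function.onFun, disjoint_left, mem_image]
    rintro _ ⟨t, -, rfl⟩ ⟨u, -, h⟩
    exact hab (List.cons.inj h).1.symm

theorem listProb_cons_of_mem_orderings {s : Finset α} {a : α} {t : List α}
    (ha : a ∈ s) (ht : t ∈ orderings (s.erase a)) :
    listProb w (a :: t) = w a / (∑ b ∈ s, w b) * listProb w t := by
  obtain ⟨hnd, hts⟩ := mem_orderings.1 ht
  rw [listProb, ← List.sum_toFinset _ hnd, hts, add_sum_erase _ _ ha]

theorem sum_listProb_orderings (hw : ∀ a, 0 < w a) (s : Finset α) :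
    ∑ l ∈ orderings s, listProb w l = 1 := by
  induction s using Finset.strongInduction with | H s ih => ?_
  rcases s.eq_empty_or_nonempty with rfl | hs
  · simp [orderings_empty, listProb]
  have hW : 0 < ∑ b ∈ s, w b := sum_pos (fun b _ => hw b) hs
  calc ∑ l ∈ orderings s, listProb w l
      = ∑ a ∈ s, ∑ t ∈ orderings (s.erase a), w a / (∑ b ∈ s, w b) * listProb w t := by
        rw [sum_orderings hs]
        exact sum_congr rfl fun a ha => sum_congr rfl fun t ht =>
          listProb_cons_of_mem_orderings ha ht
    _ = ∑ a ∈ s, w a / ∑ b ∈ s, w b := by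
        refine sum_congr rfl fun a ha => ?_
        rw [← mul_sum, ih _ (erase_ssubset ha), mul_one]
    _ = 1 := by rw [← sum_div, div_self hW.ne']

theorem idxOf_lt_idxOf_cons_iff {x a b : α} {t : List α} (hbx : b ≠ x) (hba : b ≠ a) :
    (b :: t).idxOf x < (b :: t).idxOf a ↔ t.idxOf x < t.idxOf a := by
  rw [List.idxOf_cons_ne _ hbx, List.idxOf_cons_ne _ hba, Nat.succ_lt_succ_iff]

theorem sum_first_draw_precedes {x : α} {A s : Finset α} (hxA : x ∉ A) (hx : x ∈ s)
    (hA : A ⊆ s) (hW : ∑ b ∈ s, w b ≠ 0) (hT : w x + ∑ a ∈ A, w a ≠ 0) :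
    ∑ b ∈ s, w b / (∑ c ∈ s, w c) *
        (if b = x then 1 else if b ∈ A then 0 else w x / (w x + ∑ a ∈ A, w a)) =
      w x / (w x + ∑ a ∈ A, w a) := by
  set W := ∑ b ∈ s, w b
  set p := w x / (w x + ∑ a ∈ A, w a)
  have hxA_sub : insert x A ⊆ s := insert_subset hx hA
  have hrest : ∀ b ∈ s \ insert x A,
      w b / W * (if b = x then 1 else if b ∈ A then 0 else p) = w b / W * p := by
    intro b hb
    simp only [mem_sdiff, mem_insert, not_or] at hb
    rw [if_neg hb.2.1, if_neg hb.2.2]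
  have hinA : ∀ b ∈ A, w b / W * (if b = x then 1 else if b ∈ A then 0 else p) = 0 :=
    fun b hb => by rw [if_neg (ne_of_mem_of_not_mem hb hxA), if_pos hb, mul_zero]
  have hWrest : ∑ b ∈ s \ insert x A, w b = W - (w x + ∑ a ∈ A, w a) := by
    rw [eq_sub_iff_add_eq, ← sum_insert hxA, sum_sdiff hxA_sub]
  have hpT : p * (w x + ∑ a ∈ A, w a) = w x := div_mul_cancel₀ _ hT
  rw [← sum_sdiff hxA_sub, sum_insert hxA, sum_congr rfl hrest, sum_congr rfl hinA,
    sum_const_zero, if_pos rfl, ← sum_mul, ← sum_div, hWrest]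
  field_simp
  linear_combination -hpT

/-- Luce's choice axiom. -/
theorem sum_listProb_precedes (hw : ∀ a, 0 < w a) {x : α} {A : Finset α} (hxA : x ∉ A)
    {s : Finset α} (hx : x ∈ s) (hA : A ⊆ s) :
    ∑ l ∈ orderings s, (if ∀ a ∈ A, l.idxOf x < l.idxOf a then listProb w l else 0) =
      w x / (w x + ∑ a ∈ A, w a) := by
  induction s using Finset.strongInduction with | H s ih => ?_
  set W := ∑ b ∈ s, w b
  set p := w x / (w x + ∑ a ∈ A, w a)
  have hW : 0 < W := sum_pos (fun b _ => hw b) ⟨x, hx⟩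
  have hT : 0 < w x + ∑ a ∈ A, w a :=
    add_pos_of_pos_of_nonneg (hw x) (sum_nonneg fun a _ => (hw a).le)
  have hfirst : ∀ b ∈ s, ∑ t ∈ orderings (s.erase b),
      (if ∀ a ∈ A, (b :: t).idxOf x < (b :: t).idxOf a then listProb w (b :: t) else 0) =
        w b / W * (if b = x then 1 else if b ∈ A then 0 else p) := by
    intro b hb
    have hcons : ∀ t ∈ orderings (s.erase b),
        (if ∀ a ∈ A, (b :: t).idxOf x < (b :: t).idxOf a then listProb w (b :: t) else 0) =
          w b / W * if ∀ a ∈ A, (b :: t).idxOf x < (b :: t).idxOf a then listProb w t else 0 :=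
      fun t ht => by rw [listProb_cons_of_mem_orderings hb ht, mul_ite, mul_zero]
    rw [sum_congr rfl hcons, ← mul_sum]
    congr 1
    split_ifs with hbx hbA
    · subst hbx
      rw [← sum_listProb_orderings hw (s.erase b)]
      refine sum_congr rfl fun t _ => if_pos fun a ha => ?_
      rw [List.idxOf_cons_self, List.idxOf_cons_ne _ (ne_of_mem_of_not_mem ha hxA).symm]
      exact Nat.succ_pos _
    · refine sum_eq_zero fun t _ => if_neg fun h => ?_
      simpa using h b hbA
    · rw [← ih (s.erase b) (erase_ssubset hb) (mem_erase.2 ⟨Ne.symm hbx, hx⟩)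
        fun a ha => mem_erase.2 ⟨ne_of_mem_of_not_mem ha hbA, hA ha⟩]
      exact sum_congr rfl fun t _ => if_congr (forall₂_congr fun a ha =>
        idxOf_lt_idxOf_cons_iff hbx (ne_of_mem_of_not_mem ha hbA).symm) rfl rfl
  rw [sum_orderings ⟨x, hx⟩, sum_congr rfl hfirst]
  exact sum_first_draw_precedes hxA hx hA hW.ne' hT.ne'

end Lists

section Rankings

variable {n : ℕ}

theorem plProb_eq_listProb (θ : Fin n → ℝ) (σ : Equiv.Perm (Fin n)) :
    plProb θ σ = listProb (fun x => Real.exp (θ x)) (List.ofFn σ.symm) := by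
  rw [listProb_ofFn]
  rfl

theorem idxOf_ofFn_symm (σ : Equiv.Perm (Fin n)) (x : Fin n) :
    (List.ofFn σ.symm).idxOf x = σ x := by
  simpa using (List.nodup_ofFn.2 σ.symm.injective).idxOf_getElem (σ x) (by simp)

theorem sum_perm_ofFn_symm (F : List (Fin n) → ℝ) :
    ∑ σ : Equiv.Perm (Fin n), F (List.ofFn σ.symm) = ∑ l ∈ orderings univ, F l := by
  have hinj : Function.Injective fun σ : Equiv.Perm (Fin n) => List.ofFn σ.symm :=
    fun _ _ h => Equiv.symm_bijective.injective (DFunLike.coe_injective (List.ofFn_injective h))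
  have himage : univ.image (fun σ : Equiv.Perm (Fin n) => List.ofFn σ.symm) = orderings univ := by
    refine eq_of_subset_of_card_le (fun l hl => ?_) ?_
    · obtain ⟨σ, -, rfl⟩ := mem_image.1 hl
      exact mem_orderings.2 ⟨List.nodup_ofFn.2 σ.symm.injective,
        eq_univ_of_forall fun x => by simpa using ⟨σ x, by simp⟩⟩
    · simp [card_orderings, card_image_of_injective _ hinj, Fintype.card_perm]
  rw [← himage, sum_image fun σ _ τ _ h => hinj h]

theorem sum_plProb (θ : Fin n → ℝ) : ∑ σ, plProb θ σ = 1 := by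
  simp_rw [plProb_eq_listProb]
  rw [sum_perm_ofFn_symm (listProb _), sum_listProb_orderings fun x => Real.exp_pos (θ x)]

theorem probOf_plProb_precedes (θ : Fin n → ℝ) {x : Fin n} {A : Finset (Fin n)} (hxA : x ∉ A) :
    probOf (plProb θ) {σ | ∀ a ∈ A, σ x < σ a} =
      Real.exp (θ x) / (Real.exp (θ x) + ∑ a ∈ A, Real.exp (θ a)) := by
  rw [← sum_listProb_precedes (fun a => Real.exp_pos (θ a)) hxA (mem_univ x) (subset_univ A),
    ← sum_perm_ofFn_symm, probOf]
  simp [idxOf_ofFn_symm, plProb_eq_listProb]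

theorem card_filter_apply_lt (σ : Equiv.Perm (Fin n)) (k : Fin n) : #{x | σ x < k} = k := by
  rw [← Fin.card_Iio k]
  exact card_equiv σ fun x => by simp

theorem min_rank1_eq (σ : Equiv.Perm (Fin n)) (i j : Fin n) :
    min (rank1 σ i) (rank1 σ j) = #{x | σ x < σ i ∧ σ x < σ j} + 1 := by
  simp_rw [← lt_min_iff, card_filter_apply_lt, rank1, Fin.coe_min]
  push_cast
  exact min_add_add_right _ _ _

theorem expect_min_rank1 (θ : Fin n → ℝ) (i j : Fin n) :
    expect (plProb θ) (fun σ => min (rank1 σ i) (rank1 σ j)) =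
      ∑ x, probOf (plProb θ) {σ | σ x < σ i ∧ σ x < σ j} + 1 := by
  simp_rw [_root_.expect, probOf, min_rank1_eq, natCast_card_filter, mul_add, mul_one, mul_sum,
    sum_add_distrib, sum_plProb, Set.mem_ofPred_eq, mul_ite, mul_one, mul_zero]
  rw [sum_comm]
  -- `probOf` decides membership classically, the filter decides `σ x < σ i ∧ σ x < σ j` directly
  congr!

theorem plProb_nonneg (θ : Fin n → ℝ) (σ : Equiv.Perm (Fin n)) : 0 ≤ plProb θ σ := by
  unfold plProb
  positivity

theorem one_div_le_probOf_plProb_lt_lt {θ : Fin n → ℝ} {B : ℝ} (hθ : ∀ i, |θ i| ≤ B)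
    {x i j : Fin n} (hxi : x ≠ i) (hxj : x ≠ j) (hij : i ≠ j) :
    1 / (1 + 2 * Real.exp (3 * B)) ≤ probOf (plProb θ) {σ | σ x < σ i ∧ σ x < σ j} := by
  have hB : 0 ≤ B := (abs_nonneg _).trans (hθ x)
  have hexp : ∀ a, Real.exp (θ a) ≤ Real.exp (3 * B) * Real.exp (θ x) := fun a => by
    rw [← Real.exp_add, Real.exp_le_exp]
    linarith [abs_le.1 (hθ a), abs_le.1 (hθ x)]
  have hset : {σ : Equiv.Perm (Fin n) | σ x < σ i ∧ σ x < σ j} =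
      {σ | ∀ a ∈ ({i, j} : Finset (Fin n)), σ x < σ a} := by
    simp
  rw [hset, probOf_plProb_precedes θ (by simp [hxi, hxj]), sum_pair hij, ← add_assoc]
  exact one_div_one_add_two_mul_le_div_add_add (Real.exp_pos _) (Real.exp_pos _).le
    (Real.exp_pos _).le (hexp i) (hexp j)

end Rankings

end PlackettLuce

/-- for a PL(θ) ranking with `‖θ‖_∞ ≤ B` and distinct items
`i ≠ j`, `E[min{σ(i),σ(j)}] ≥ (1/2)·(n/(1+2e^{3B}) + 1)`. -/
theorem pl_min_rank_expectation_bound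
    (n : ℕ) (B : ℝ) (θ : Fin n → ℝ) (hθ : ∀ i, |θ i| ≤ B)
    (i j : Fin n) (hij : i ≠ j) :
    (1 / 2) * ((n : ℝ) / (1 + 2 * Real.exp (3 * B)) + 1) ≤
      expect (plProb θ) (fun σ => min (rank1 σ i) (rank1 σ j)) := by
  set D := 1 + 2 * Real.exp (3 * B)
  have hD : 3 ≤ D := by
    have := Real.one_le_exp (mul_nonneg zero_le_three ((abs_nonneg _).trans (hθ i)))
    linarith
  have hn : (1 : ℝ) ≤ n := Nat.one_le_cast.2 i.pos
  have hsum : ((n : ℝ) - 2) * (1 / D) ≤ ∑ x, probOf (plProb θ) {σ | σ x < σ i ∧ σ x < σ j} := by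
    have := card_sub_mul_le_sum {i, j} (fun x => probOf_nonneg (PlackettLuce.plProb_nonneg θ) _)
      fun x hx => by
        simp only [mem_insert, mem_singleton, not_or] at hx
        exact PlackettLuce.one_div_le_probOf_plProb_lt_lt hθ hx.1 hx.2 hij
    rwa [Fintype.card_fin, card_pair hij, Nat.cast_ofNat] at this
  have hu : 0 < 1 / D := by positivity
  have hu3 : 1 / D ≤ 1 / 3 := one_div_le_one_div_of_le zero_lt_three hD
  rw [PlackettLuce.expect_min_rank1, div_eq_mul_one_div (n : ℝ) D]
  nlinarith

end
end
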